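/- arXiv:1305.6014 — 13 statements merged into one kernel-verified Lean document; each statement's English description precedes it below -/
import Mathlib

section
/- Let B → K and C → K be ring homomorphisms with C → K surjective, and let A = B ×_K C be the fiber product ring. Then the natural map B ⊗_A C → K is an isomorphism. -/
/-!
Every `b : B` lifts to `A`: pick `c` with the same image in `K` as `b`; the pair `(b, c)` then
comes from `A`. So `C → B ⊗[A] C`, `c ↦ 1 ⊗ c`, is surjective, and composed with the product map
it is the surjection `C → K`. An element `c` of the kernel of `C → K` comes from some `a : A`
with image `0` in `B`, hence `1 ⊗ c = a • (1 ⊗ 1) = (a • 1) ⊗ 1 = 0`.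
-/

open TensorProduct

theorem surjective_algebraMap_of_forall_exists_pullback {A B C K : Type*} [CommRing A]
    [CommRing B] [CommRing C] [CommRing K] [Algebra A B] [Algebra A C] [Algebra B K]
    [Algebra C K] (hsurj : Function.Surjective (algebraMap C K))
    (hpull : ∀ (b : B) (c : C), algebraMap B K b = algebraMap C K c →
      ∃ a : A, algebraMap A B a = b ∧ algebraMap A C a = c) :
    Function.Surjective (algebraMap A B) := fun b ↦
  let ⟨c, hc⟩ := hsurj (algebraMap B K b)
  let ⟨a, ha, _⟩ := hpull b c hc.symm
  ⟨a, ha⟩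

theorem Algebra.TensorProduct.includeRight_algebraMap_eq_zero {A B C : Type*} [CommRing A]
    [CommRing B] [CommRing C] [Algebra A B] [Algebra A C] {a : A}
    (ha : algebraMap A B a = 0) :
    (Algebra.TensorProduct.includeRight : C →ₐ[A] B ⊗[A] C) (algebraMap A C a) = 0 := by
  rw [AlgHom.commutes, Algebra.TensorProduct.algebraMap_apply, ha, zero_tmul]

/-- Ferrand fiber product: `B ⊗_A C → K` is an isomorphism when `A = B ×_K C`
and `C → K` is surjective. -/
theorem ferrand_tensor_iso
    (A B C K : Type*) [CommRing A] [CommRing B] [CommRing C] [CommRing K]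
    [Algebra A B] [Algebra A C] [Algebra A K] [Algebra B K] [Algebra C K]
    [IsScalarTower A B K] [IsScalarTower A C K]
    (hsurj : Function.Surjective (algebraMap C K))
    (hpull : ∀ (b : B) (c : C), algebraMap B K b = algebraMap C K c →
      ∃! a : A, algebraMap A B a = b ∧ algebraMap A C a = c) :
    Function.Bijective
      (Algebra.TensorProduct.productMap
        (IsScalarTower.toAlgHom A B K) (IsScalarTower.toAlgHom A C K)) := by
  set f := Algebra.TensorProduct.productMap
    (IsScalarTower.toAlgHom A B K) (IsScalarTower.toAlgHom A C K)
  have hB : Function.Surjective (algebraMap A B) :=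
    surjective_algebraMap_of_forall_exists_pullback hsurj fun b c h ↦ (hpull b c h).exists
  have hinc := Algebra.TensorProduct.includeRight_surjective C hB
  have hcomp : ∀ c, f (Algebra.TensorProduct.includeRight c) = algebraMap C K c :=
    Algebra.TensorProduct.productMap_right_apply _ _
  refine ⟨(injective_iff_map_eq_zero f).mpr fun x hx ↦ ?_, fun k ↦ ?_⟩
  · obtain ⟨c, rfl⟩ := hinc x
    obtain ⟨a, ⟨ha, rfl⟩, -⟩ := hpull 0 c (by rw [← hcomp, hx, map_zero])
    exact Algebra.TensorProduct.includeRight_algebraMap_eq_zero ha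
  · obtain ⟨c, rfl⟩ := hsurj k
    exact ⟨_, hcomp c⟩
end

section
/- Let B → K and C → K be ring homomorphisms with C → K surjective, A = B ×_K C, and let A → A' be a flat ring homomorphism. Then the natural map A' → (B ⊗_A A') ×_{K ⊗_A A'} (C ⊗_A A') is an isomorphism, i.e., the base-changed diagram is again a fiber product diagram with C ⊗_A A' → K ⊗_A A' surjective. -/
/-!
The fiber product condition says exactly that `0 → A → B × C → K`, `(b, c) ↦ b̄ - c̄`, is exact.
Tensoring with a flat `A'` keeps this left exact sequence exact, and identifies
`(B × C) ⊗ A'` with `(B ⊗ A') × (C ⊗ A')`; surjectivity of `C ⊗ A' → K ⊗ A'` is right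
exactness of the tensor product.
-/

open TensorProduct

namespace LinearMap

section Semiring

variable {R P M N Q : Type*} [CommSemiring R] [AddCommMonoid P] [AddCommMonoid M]
  [AddCommMonoid N] [AddCommMonoid Q] [Module R P] [Module R M] [Module R N] [Module R Q]

structure IsPullback (f : P →ₗ[R] M) (g : P →ₗ[R] N) (u : M →ₗ[R] Q) (v : N →ₗ[R] Q) :
    Prop where
  comp_eq : u ∘ₗ f = v ∘ₗ g
  existsUnique : ∀ m n, u m = v n → ∃! p, f p = m ∧ g p = n

variable {f : P →ₗ[R] M} {g : P →ₗ[R] N} {u : M →ₗ[R] Q} {v : N →ₗ[R] Q}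

theorem IsPullback.comp_linearEquiv {P' : Type*} [AddCommMonoid P'] [Module R P']
    (h : IsPullback f g u v) (e : P' ≃ₗ[R] P) :
    IsPullback (f ∘ₗ e.toLinearMap) (g ∘ₗ e.toLinearMap) u v := by
  refine ⟨by rw [← comp_assoc, h.comp_eq, comp_assoc], fun m n hmn ↦ ?_⟩
  obtain ⟨p, hp, huniq⟩ := h.existsUnique m n hmn
  exact ⟨e.symm p, by simpa using hp, fun p' hp' ↦ e.eq_symm_apply.2 (huniq _ hp')⟩

variable (F : Type*) [AddCommMonoid F] [Module R F]

theorem prodLeft_comp_rTensor_prod :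
    (prodLeft R R M N F : (M × N) ⊗[R] F →ₗ[R] _) ∘ₗ (f.prod g).rTensor F =
      (f.rTensor F).prod (g.rTensor F) := by
  ext p x <;> simp

theorem rTensor_coprod :
    (u.coprod v).rTensor F = (u.rTensor F).coprod (v.rTensor F) ∘ₗ prodLeft R R M N F := by
  ext m x <;> simp

end Semiring

variable {R P M N Q : Type*} [CommRing R] [AddCommGroup P] [AddCommGroup M] [AddCommGroup N]
  [AddCommGroup Q] [Module R P] [Module R M] [Module R N] [Module R Q]
  {f : P →ₗ[R] M} {g : P →ₗ[R] N} {u : M →ₗ[R] Q} {v : N →ₗ[R] Q}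

theorem isPullback_iff :
    IsPullback f g u v ↔
      Function.Injective (f.prod g) ∧ Function.Exact (f.prod g) (u.coprod (-v)) := by
  constructor
  · rintro ⟨hcomm, hpull⟩
    refine ⟨fun p₁ p₂ h ↦ ?_, fun ⟨m, n⟩ ↦ ⟨fun h ↦ ?_, ?_⟩⟩
    · obtain ⟨hf, hg⟩ := Prod.ext_iff.1 h
      exact (hpull _ _ (congr($hcomm p₁))).unique ⟨rfl, rfl⟩ ⟨hf.symm, hg.symm⟩
    · obtain ⟨p, ⟨hf, hg⟩, -⟩ := hpull m n (by simpa [← sub_eq_add_neg, sub_eq_zero] using h)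
      exact ⟨p, by simp [hf, hg]⟩
    · rintro ⟨p, hp⟩
      obtain ⟨rfl, rfl⟩ := Prod.ext_iff.1 hp
      simpa [← sub_eq_add_neg, sub_eq_zero] using congr($hcomm p)
  · rintro ⟨hinj, hexact⟩
    refine ⟨?_, fun m n h ↦ ?_⟩
    · ext p
      simpa [← sub_eq_add_neg, sub_eq_zero] using hexact.apply_apply_eq_zero p
    · obtain ⟨p, hp⟩ := (hexact (m, n)).1 (by simp [h])
      exact ⟨p, Prod.ext_iff.1 hp, fun p' hp' ↦ hinj (by rw [hp]; exact Prod.ext_iff.2 hp')⟩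

theorem IsPullback.rTensor (F : Type*) [AddCommGroup F] [Module R F] [Module.Flat R F]
    (h : IsPullback f g u v) :
    IsPullback (f.rTensor F) (g.rTensor F) (u.rTensor F) (v.rTensor F) := by
  rw [isPullback_iff] at h ⊢
  obtain ⟨hinj, hexact⟩ := h
  refine ⟨?_, ?_⟩
  · rw [← prodLeft_comp_rTensor_prod, coe_comp]
    exact (prodLeft R R M N F).injective.comp
      (Module.Flat.rTensor_preserves_injective_linearMap _ hinj)
  · refine Function.Exact.of_ladder_linearEquiv_of_exact (e₁ := LinearEquiv.refl R _)
      (e₂ := prodLeft R R M N F) (e₃ := LinearEquiv.refl R _) ?_ ?_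
      (Module.Flat.rTensor_exact F hexact)
    · simp [prodLeft_comp_rTensor_prod]
    · simp [rTensor_coprod, rTensor_neg]

end LinearMap

/-- Flat base change of a Ferrand fiber product diagram is again a fiber
product diagram, with `C ⊗_A A' → K ⊗_A A'` surjective. -/
theorem ferrand_flat_base_change
    (A B C K : Type*) [CommRing A] [CommRing B] [CommRing C] [CommRing K]
    [Algebra A B] [Algebra A C] [Algebra A K] [Algebra B K] [Algebra C K]
    [IsScalarTower A B K] [IsScalarTower A C K]
    (hsurj : Function.Surjective (algebraMap C K))
    (hpull : ∀ (b : B) (c : C), algebraMap B K b = algebraMap C K c →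
      ∃! a : A, algebraMap A B a = b ∧ algebraMap A C a = c)
    (A' : Type*) [CommRing A'] [Algebra A A'] [Module.Flat A A'] :
    Function.Surjective
        (Algebra.TensorProduct.map (IsScalarTower.toAlgHom A C K) (AlgHom.id A A') :
          C ⊗[A] A' →ₐ[A] K ⊗[A] A') ∧
      ∀ (x : B ⊗[A] A') (y : C ⊗[A] A'),
        Algebra.TensorProduct.map (IsScalarTower.toAlgHom A B K) (AlgHom.id A A') x =
          Algebra.TensorProduct.map (IsScalarTower.toAlgHom A C K) (AlgHom.id A A') y →
        ∃! a' : A', (1 : B) ⊗ₜ[A] a' = x ∧ (1 : C) ⊗ₜ[A] a' = y := by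
  have hsquare : LinearMap.IsPullback (Algebra.linearMap A B) (Algebra.linearMap A C)
      (IsScalarTower.toAlgHom A B K).toLinearMap (IsScalarTower.toAlgHom A C K).toLinearMap :=
    ⟨by ext; simp, hpull⟩
  obtain ⟨-, hpull'⟩ := (hsquare.rTensor A').comp_linearEquiv (TensorProduct.lid A A').symm
  refine ⟨LinearMap.rTensor_surjective A' (g := (IsScalarTower.toAlgHom A C K).toLinearMap) hsurj,
    fun x y hxy ↦ ?_⟩
  simpa using hpull' x y hxy
end

section
/- Let B → K and C → K be ring homomorphisms with C → K surjective, A = B ×_K C, and let I = Ker(A → B) be the conductor. For any element f ∈ I, the localization homomorphism A_f → C_f (induced by the projection A → C) is an isomorphism. -/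
/-! An element `f` of the conductor maps to `0` in `B`, hence in `K`. So `f` kills every `a ∈ A`
that vanishes in `C` (then `f * a` vanishes in both `B` and `C`, hence is `0` by uniqueness in
the fiber product), and `(0, f * c)` lies in the fiber product for every `c ∈ C`. These are the
injectivity and surjectivity criteria for `A_f → C_f`. -/

section FiberProduct

variable {A B C K : Type*} [CommRing A] [CommRing B] [CommRing C] [CommRing K]
  [Algebra A B] [Algebra A C] [Algebra B K] [Algebra C K]

theorem eq_zero_of_algebraMap_eq_zero_of_unique_lift
    (hpull : ∀ (b : B) (c : C), algebraMap B K b = algebraMap C K c →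
      ∃! a : A, algebraMap A B a = b ∧ algebraMap A C a = c)
    {x : A} (hB : algebraMap A B x = 0) (hC : algebraMap A C x = 0) : x = 0 := by
  obtain ⟨a, -, ha⟩ := hpull 0 0 (by simp)
  exact (ha x ⟨hB, hC⟩).trans (ha 0 ⟨map_zero _, map_zero _⟩).symm

theorem exists_algebraMap_eq_mul_of_algebraMap_eq_zero [Algebra A K]
    [IsScalarTower A B K] [IsScalarTower A C K]
    (hpull : ∀ (b : B) (c : C), algebraMap B K b = algebraMap C K c →
      ∃! a : A, algebraMap A B a = b ∧ algebraMap A C a = c)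
    {f : A} (hf : algebraMap A B f = 0) (c : C) :
    ∃ a : A, algebraMap A C a = algebraMap A C f * c := by
  have hfK : algebraMap C K (algebraMap A C f) = 0 := by
    rw [← IsScalarTower.algebraMap_apply, IsScalarTower.algebraMap_apply A B K, hf, map_zero]
  obtain ⟨a, ⟨-, ha⟩, -⟩ := hpull 0 (algebraMap A C f * c) (by simp [hfK])
  exact ⟨a, ha⟩

end FiberProduct

theorem ferrand_conductor_localization_iso_general
    (A B C K : Type*) [CommRing A] [CommRing B] [CommRing C] [CommRing K]
    [Algebra A B] [Algebra A C] [Algebra A K] [Algebra B K] [Algebra C K]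
    [IsScalarTower A B K] [IsScalarTower A C K]
    (hpull : ∀ (b : B) (c : C), algebraMap B K b = algebraMap C K c →
      ∃! a : A, algebraMap A B a = b ∧ algebraMap A C a = c)
    (f : A) (hf : f ∈ RingHom.ker (algebraMap A B)) :
    Function.Bijective (Localization.awayMap (algebraMap A C) f) := by
  rw [RingHom.mem_ker] at hf
  refine ⟨Localization.awayMap_injective_iff.mpr fun a ha ↦ ⟨1, ?_⟩,
    Localization.awayMap_surjective_iff.mpr fun c ↦ ?_⟩
  · exact eq_zero_of_algebraMap_eq_zero_of_unique_lift hpull (by simp [hf]) (by simp [ha])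
  · obtain ⟨a, ha⟩ := exists_algebraMap_eq_mul_of_algebraMap_eq_zero hpull hf c
    exact ⟨a, 1, by rw [ha, pow_one]⟩

/-- For `f` in the conductor `I = Ker(A → B)`, the induced map of
localizations `A_f → C_f` is an isomorphism. -/
theorem ferrand_conductor_localization_iso
    (A B C K : Type*) [CommRing A] [CommRing B] [CommRing C] [CommRing K]
    [Algebra A B] [Algebra A C] [Algebra A K] [Algebra B K] [Algebra C K]
    [IsScalarTower A B K] [IsScalarTower A C K]
    (hsurj : Function.Surjective (algebraMap C K))
    (hpull : ∀ (b : B) (c : C), algebraMap B K b = algebraMap C K c →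
      ∃! a : A, algebraMap A B a = b ∧ algebraMap A C a = c)
    (f : A) (hf : f ∈ RingHom.ker (algebraMap A B)) :
    Function.Bijective (Localization.awayMap (algebraMap A C) f) :=
  ferrand_conductor_localization_iso_general A B C K hpull f hf
end

section
/- Let B → K and C → K be ring homomorphisms with C → K surjective, A = B ×_K C, and let M be a flat A-module. Then the natural map M → (M ⊗_A B) ×_{M ⊗_A K} (M ⊗_A C) is an isomorphism. -/
/-!
The fiber product `A = B ×_K C` is the kernel in the exact sequence of `A`-modules
`0 → A → B × C → K`, `(b, c) ↦ b - c`. Tensoring with the flat module `M` keeps it exact, and via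
`M ⊗ (B × C) ≃ M ⊗ B × M ⊗ C` and `M ⊗ A ≃ M` exactness of the tensored sequence says precisely
that `M` is the fiber product of `M ⊗ B` and `M ⊗ C` over `M ⊗ K`.
-/

open TensorProduct

section FlatPullback

variable {R M N P Q S : Type*} [CommRing R] [AddCommGroup M] [AddCommGroup N] [AddCommGroup P]
  [AddCommGroup Q] [AddCommGroup S] [Module R M] [Module R N] [Module R P] [Module R Q]
  [Module R S]

theorem TensorProduct.prodRight_lTensor_prod (i : N →ₗ[R] P) (j : N →ₗ[R] Q) (n : M ⊗[R] N) :
    prodRight R R M P Q (i.prod j |>.lTensor M n) = (i.lTensor M n, j.lTensor M n) := by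
  induction n using TensorProduct.induction_on with
  | zero => simp [Prod.zero_eq_mk]
  | tmul m x => simp
  | add n n' hn hn' => simp only [map_add, hn, hn', Prod.mk_add_mk]

theorem TensorProduct.lTensor_sub_comp_fst_snd (u : P →ₗ[R] S) (v : Q →ₗ[R] S)
    (z : M ⊗[R] (P × Q)) :
    (u ∘ₗ LinearMap.fst R P Q - v ∘ₗ LinearMap.snd R P Q).lTensor M z =
      u.lTensor M (prodRight R R M P Q z).1 - v.lTensor M (prodRight R R M P Q z).2 := by
  induction z using TensorProduct.induction_on with
  | zero => simp
  | tmul m x => simp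
  | add z z' hz hz' =>
    simp only [map_add, hz, hz', Prod.fst_add, Prod.snd_add]
    abel

/-- Tensoring with a flat module preserves pullback squares of modules. -/
theorem Module.Flat.existsUnique_lTensor_of_exact [Module.Flat R M]
    {i : N →ₗ[R] P} {j : N →ₗ[R] Q} {u : P →ₗ[R] S} {v : Q →ₗ[R] S}
    (hinj : Function.Injective (i.prod j))
    (hexact : Function.Exact (i.prod j) (u ∘ₗ LinearMap.fst R P Q - v ∘ₗ LinearMap.snd R P Q))
    (x : M ⊗[R] P) (y : M ⊗[R] Q) (hxy : u.lTensor M x = v.lTensor M y) :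
    ∃! n : M ⊗[R] N, i.lTensor M n = x ∧ j.lTensor M n = y := by
  set e := prodRight R R M P Q
  have hker : (u ∘ₗ LinearMap.fst R P Q - v ∘ₗ LinearMap.snd R P Q).lTensor M (e.symm (x, y)) =
      0 := by
    rw [TensorProduct.lTensor_sub_comp_fst_snd, e.apply_symm_apply, hxy, sub_self]
  obtain ⟨n, hn⟩ := (Module.Flat.lTensor_exact M hexact _).mp hker
  have hcomp : ∀ n' : M ⊗[R] N, e ((i.prod j).lTensor M n') = (i.lTensor M n', j.lTensor M n') :=
    TensorProduct.prodRight_lTensor_prod i j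
  refine ⟨n, ?_, fun n' ⟨hx, hy⟩ => ?_⟩
  · simpa [hn, e, eq_comm] using hcomp n
  · apply Module.Flat.lTensor_preserves_injective_linearMap _ hinj
    rw [hn, e.eq_symm_apply.mpr (hcomp n'), hx, hy]

end FlatPullback

section FiberProduct

variable {A B C K : Type*} [CommRing A] [CommRing B] [CommRing C] [CommRing K]
  [Algebra A B] [Algebra A C] [Algebra A K] [Algebra B K] [Algebra C K]
  [IsScalarTower A B K] [IsScalarTower A C K]

theorem injective_linearMap_prod_of_isPullback
    (hpull : ∀ (b : B) (c : C), algebraMap B K b = algebraMap C K c →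
      ∃! a : A, algebraMap A B a = b ∧ algebraMap A C a = c) :
    Function.Injective ((Algebra.linearMap A B).prod (Algebra.linearMap A C)) := by
  intro a a' h
  obtain ⟨hb, hc⟩ := Prod.ext_iff.mp h
  have hK : algebraMap B K (algebraMap A B a) = algebraMap C K (algebraMap A C a) := by
    rw [← IsScalarTower.algebraMap_apply, ← IsScalarTower.algebraMap_apply]
  exact (hpull _ _ hK).unique ⟨rfl, rfl⟩ ⟨hb.symm, hc.symm⟩

theorem exact_linearMap_prod_of_isPullback
    (hpull : ∀ (b : B) (c : C), algebraMap B K b = algebraMap C K c →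
      ∃! a : A, algebraMap A B a = b ∧ algebraMap A C a = c) :
    Function.Exact ((Algebra.linearMap A B).prod (Algebra.linearMap A C))
      ((IsScalarTower.toAlgHom A B K).toLinearMap ∘ₗ LinearMap.fst A B C -
        (IsScalarTower.toAlgHom A C K).toLinearMap ∘ₗ LinearMap.snd A B C) := by
  rintro ⟨b, c⟩
  simp only [LinearMap.sub_apply, LinearMap.comp_apply, LinearMap.fst_apply, LinearMap.snd_apply,
    AlgHom.toLinearMap_apply, IsScalarTower.coe_toAlgHom', sub_eq_zero, Set.mem_range,
    LinearMap.prod_apply, Function.prod, Algebra.linearMap_apply, Prod.mk.injEq]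
  constructor
  · intro h
    obtain ⟨a, ha, -⟩ := hpull b c h
    exact ⟨a, ha⟩
  · rintro ⟨a, rfl, rfl⟩
    rw [← IsScalarTower.algebraMap_apply, ← IsScalarTower.algebraMap_apply]

end FiberProduct

theorem ferrand_flat_module_fiber_product_general
    (A B C K : Type*) [CommRing A] [CommRing B] [CommRing C] [CommRing K]
    [Algebra A B] [Algebra A C] [Algebra A K] [Algebra B K] [Algebra C K]
    [IsScalarTower A B K] [IsScalarTower A C K]
    (hpull : ∀ (b : B) (c : C), algebraMap B K b = algebraMap C K c →
      ∃! a : A, algebraMap A B a = b ∧ algebraMap A C a = c)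
    (M : Type*) [AddCommGroup M] [Module A M] [Module.Flat A M] :
    ∀ (x : M ⊗[A] B) (y : M ⊗[A] C),
      LinearMap.lTensor M (IsScalarTower.toAlgHom A B K).toLinearMap x =
        LinearMap.lTensor M (IsScalarTower.toAlgHom A C K).toLinearMap y →
      ∃! m : M, m ⊗ₜ[A] (1 : B) = x ∧ m ⊗ₜ[A] (1 : C) = y := by
  intro x y hxy
  have h := Module.Flat.existsUnique_lTensor_of_exact (injective_linearMap_prod_of_isPullback hpull)
    (exact_linearMap_prod_of_isPullback hpull) x y hxy
  rw [(TensorProduct.rid A M).symm.bijective.existsUnique_iff] at h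
  simpa using h

/-- For a flat `A`-module `M`, the natural map
`M → (M ⊗_A B) ×_{M ⊗_A K} (M ⊗_A C)` is an isomorphism. -/
theorem ferrand_flat_module_fiber_product
    (A B C K : Type*) [CommRing A] [CommRing B] [CommRing C] [CommRing K]
    [Algebra A B] [Algebra A C] [Algebra A K] [Algebra B K] [Algebra C K]
    [IsScalarTower A B K] [IsScalarTower A C K]
    (hsurj : Function.Surjective (algebraMap C K))
    (hpull : ∀ (b : B) (c : C), algebraMap B K b = algebraMap C K c →
      ∃! a : A, algebraMap A B a = b ∧ algebraMap A C a = c)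
    (M : Type*) [AddCommGroup M] [Module A M] [Module.Flat A M] :
    ∀ (x : M ⊗[A] B) (y : M ⊗[A] C),
      LinearMap.lTensor M (IsScalarTower.toAlgHom A B K).toLinearMap x =
        LinearMap.lTensor M (IsScalarTower.toAlgHom A C K).toLinearMap y →
      ∃! m : M, m ⊗ₜ[A] (1 : B) = x ∧ m ⊗ₜ[A] (1 : C) = y :=
  ferrand_flat_module_fiber_product_general A B C K hpull M
end

section
/- Let B → K and C → K be ring homomorphisms with C → K surjective, A = B ×_K C, and let A → A' be a ring homomorphism. If B ⊗_A A' is a finitely generated B-algebra and C ⊗_A A' is a finitely generated C-algebra, then A' is a finitely generated A-algebra. -/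
/-!
Since `C → K` is surjective, so is `A → B`; let `J` be its kernel, so that `B = A ⧸ J`. Descending
finite generation reduces to a statement about modules: an `A`-module `P` with `B ⊗ P = 0` and
`C ⊗ P = 0` vanishes (apply it to `P = A' ⧸ S` for a finitely generated subalgebra `S` whose base
changes to `B` and `C` are everything). Now `B ⊗ P = P ⧸ J P` gives `J P = P`. On the other hand
`J` is identified with the ideal `ker (C → K)` of `C`, so each `j ∈ J` is the value at `1` of an
`A`-linear map `C → A`; hence `j` acts on `P` through `C ⊗ P = 0`, and `J P = 0`.
-/

open TensorProduct

namespace Subalgebra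

variable {R A : Type*} (B : Type*) [CommSemiring R] [Semiring A] [Algebra R A]
  [CommSemiring B] [Algebra R B]

theorem toSubmodule_baseChange (S : Subalgebra R A) :
    toSubmodule (S.baseChange B) = (toSubmodule S).baseChange B :=
  rfl

theorem baseChange_mono {S T : Subalgebra R A} (h : S ≤ T) : S.baseChange B ≤ T.baseChange B := by
  rw [← toSubmodule.le_iff_le, toSubmodule_baseChange, toSubmodule_baseChange]
  exact Submodule.baseChange_mono B (toSubmodule.monotone h)

theorem toSubmodule_baseChange_eq_top_of_le {S T : Subalgebra R A} (h : S ≤ T)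
    (hS : S.baseChange B = ⊤) : (toSubmodule T).baseChange B = ⊤ := by
  rw [← toSubmodule_baseChange, Algebra.toSubmodule_eq_top]
  exact top_unique (hS ▸ baseChange_mono B h)

end Subalgebra

theorem Algebra.FiniteType.exists_fg_baseChange_eq_top {R A B : Type*} [CommSemiring R]
    [Semiring A] [Algebra R A] [CommSemiring B] [Algebra R B]
    [Algebra.FiniteType B (B ⊗[R] A)] :
    ∃ S : Subalgebra R A, S.FG ∧ S.baseChange B = ⊤ := by
  obtain ⟨s, hs⟩ := Algebra.FiniteType.out (R := B) (A := B ⊗[R] A)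
  choose C hC hxC using fun x : B ⊗[R] A => exists_fg_and_mem_baseChange x
  choose t ht htC using fun x => Subalgebra.fg_def.mp (hC x)
  refine ⟨Algebra.adjoin R (⋃ x ∈ s, t x), Subalgebra.fg_def.mpr ⟨_, ?_, rfl⟩, ?_⟩
  · exact s.finite_toSet.biUnion fun x _ => ht x
  · rw [← top_le_iff, ← hs, Algebra.adjoin_le_iff]
    intro x hx
    refine Subalgebra.baseChange_mono B ?_ (hxC x)
    rw [← htC x]
    exact Algebra.adjoin_mono (Set.subset_biUnion_of_mem hx)

theorem Submodule.subsingleton_tensor_quotient_of_baseChange_eq_top {R M : Type*} (A : Type*)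
    [CommRing R] [Ring A] [Algebra R A] [AddCommGroup M] [Module R M] {N : Submodule R M}
    (hN : N.baseChange A = ⊤) : Subsingleton (A ⊗[R] (M ⧸ N)) := by
  have hker : LinearMap.ker (N.mkQ.lTensor A) = ⊤ := by
    rw [lTensor_mkQ, eq_top_iff]
    intro x _
    obtain ⟨y, rfl⟩ : x ∈ N.baseChange A := hN ▸ Submodule.mem_top
    exact ⟨y, rfl⟩
  refine subsingleton_of_forall_eq 0 fun z => ?_
  obtain ⟨x, rfl⟩ := LinearMap.lTensor_surjective A N.mkQ_surjective z
  rw [LinearMap.ker_eq_top.mp hker, LinearMap.zero_apply]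

theorem smul_eq_zero_of_subsingleton_tensor {R N M : Type*} [CommSemiring R]
    [AddCommMonoid N] [Module R N] [AddCommMonoid M] [Module R M] [Subsingleton (N ⊗[R] M)]
    (f : N →ₗ[R] R) (n : N) (m : M) : f n • m = 0 := by
  have : f n • m = TensorProduct.lid R M (f.rTensor M (n ⊗ₜ m)) := by simp
  rw [this, Subsingleton.elim (n ⊗ₜ[R] m) 0, map_zero, map_zero]

theorem Ideal.smul_top_eq_top_of_subsingleton_tensor {R S M : Type*} [CommRing R] [CommRing S]
    [Algebra R S] [AddCommGroup M] [Module R M] (hS : Function.Surjective (algebraMap R S))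
    [Subsingleton (S ⊗[R] M)] : RingHom.ker (algebraMap R S) • (⊤ : Submodule R M) = ⊤ := by
  rw [← Submodule.Quotient.subsingleton_iff]
  let e : (R ⧸ RingHom.ker (algebraMap R S)) ≃ₐ[R] S :=
    Ideal.quotientKerAlgEquivOfSurjective (f := Algebra.ofId R S) hS
  exact ((TensorProduct.quotTensorEquivQuotSMul M _).symm ≪≫ₗ
    TensorProduct.congr e.toLinearEquiv (LinearEquiv.refl R M)).subsingleton

namespace Algebra

/-- `A` is the fiber product `B ×_K C`, expressed through the structure maps. -/
def IsFiberProduct (A B C K : Type*) [CommRing A] [CommRing B] [CommRing C] [CommRing K]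
    [Algebra A B] [Algebra A C] [Algebra B K] [Algebra C K] : Prop :=
  ∀ (b : B) (c : C), algebraMap B K b = algebraMap C K c →
    ∃! a : A, algebraMap A B a = b ∧ algebraMap A C a = c

namespace IsFiberProduct

theorem algebraMap_surjective {A B C K : Type*} [CommRing A] [CommRing B] [CommRing C]
    [CommRing K] [Algebra A B] [Algebra A C] [Algebra B K] [Algebra C K]
    (h : IsFiberProduct A B C K) (hsurj : Function.Surjective (algebraMap C K)) :
    Function.Surjective (algebraMap A B) := by
  intro b
  obtain ⟨c, hc⟩ := hsurj (algebraMap B K b)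
  obtain ⟨a, ⟨ha, -⟩, -⟩ := h b c hc.symm
  exact ⟨a, ha⟩

variable {A B C K : Type*} [CommRing A] [CommRing B] [CommRing C] [CommRing K]
  [Algebra A B] [Algebra A C] [Algebra A K] [Algebra B K] [Algebra C K]
  [IsScalarTower A B K] [IsScalarTower A C K]

theorem exists_linearMap_map_one_eq (h : IsFiberProduct A B C K) {j : A}
    (hj : algebraMap A B j = 0) : ∃ f : C →ₗ[A] A, f 1 = j := by
  -- `A` is the range of `ψ`, which contains `(0, c * j)` because `j` maps to `0` in `K`.
  let ψ : A →ₗ[A] B × C := (Algebra.linearMap A B).prod (Algebra.linearMap A C)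
  have hψ : Function.Injective ψ := fun a a' haa' => by
    obtain ⟨hB, hC⟩ := Prod.ext_iff.mp haa'
    have hK : algebraMap B K (algebraMap A B a) = algebraMap C K (algebraMap A C a) := by
      rw [← IsScalarTower.algebraMap_apply, ← IsScalarTower.algebraMap_apply]
    exact (h _ _ hK).unique ⟨rfl, rfl⟩ ⟨hB.symm, hC.symm⟩
  let μ : C →ₗ[A] B × C := LinearMap.inr A B C ∘ₗ LinearMap.mulRight A (algebraMap A C j)
  have hμ : ∀ c, μ c ∈ LinearMap.range ψ := fun c => by
    have hK : algebraMap B K 0 = algebraMap C K (c * algebraMap A C j) := by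
      rw [map_zero, map_mul, ← IsScalarTower.algebraMap_apply, IsScalarTower.algebraMap_apply A B K,
        hj, map_zero, mul_zero]
    obtain ⟨a, ⟨ha0, hac⟩, -⟩ := h _ _ hK
    exact ⟨a, Prod.ext ha0 hac⟩
  refine ⟨(LinearEquiv.ofInjective ψ hψ).symm ∘ₗ μ.codRestrict _ hμ, hψ ?_⟩
  simp [ψ, μ, hj]

theorem subsingleton_of_subsingleton_tensor (h : IsFiberProduct A B C K)
    (hsurj : Function.Surjective (algebraMap C K)) (P : Type*) [AddCommGroup P] [Module A P]
    [Subsingleton (B ⊗[A] P)] [Subsingleton (C ⊗[A] P)] : Subsingleton P := by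
  have hJ_top := Ideal.smul_top_eq_top_of_subsingleton_tensor (M := P)
    (h.algebraMap_surjective hsurj)
  have hJ_bot : RingHom.ker (algebraMap A B) • (⊤ : Submodule A P) ≤ ⊥ :=
    Submodule.smul_le.mpr fun j hj p _ => by
      obtain ⟨f, rfl⟩ := h.exists_linearMap_map_one_eq hj
      exact smul_eq_zero_of_subsingleton_tensor f 1 p
  refine subsingleton_of_forall_eq 0 fun p => ?_
  simpa using hJ_bot (hJ_top.ge (Submodule.mem_top (x := p)))

theorem submodule_eq_top_of_baseChange_eq_top (h : IsFiberProduct A B C K)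
    (hsurj : Function.Surjective (algebraMap C K)) {M : Type*} [AddCommGroup M] [Module A M]
    {N : Submodule A M} (hB : N.baseChange B = ⊤) (hC : N.baseChange C = ⊤) : N = ⊤ := by
  have := N.subsingleton_tensor_quotient_of_baseChange_eq_top B hB
  have := N.subsingleton_tensor_quotient_of_baseChange_eq_top C hC
  exact Submodule.Quotient.subsingleton_iff.mp (h.subsingleton_of_subsingleton_tensor hsurj _)

end IsFiberProduct

end Algebra

/-- Descent of finite generation of algebras through a Ferrand fiber product:
if `B ⊗_A A'` and `C ⊗_A A'` are finitely generated algebras, so is `A'`. -/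
theorem ferrand_descent_finiteType
    (A B C K : Type*) [CommRing A] [CommRing B] [CommRing C] [CommRing K]
    [Algebra A B] [Algebra A C] [Algebra A K] [Algebra B K] [Algebra C K]
    [IsScalarTower A B K] [IsScalarTower A C K]
    (hsurj : Function.Surjective (algebraMap C K))
    (hpull : ∀ (b : B) (c : C), algebraMap B K b = algebraMap C K c →
      ∃! a : A, algebraMap A B a = b ∧ algebraMap A C a = c)
    (A' : Type*) [CommRing A'] [Algebra A A']
    (hB : Algebra.FiniteType B (B ⊗[A] A'))
    (hC : Algebra.FiniteType C (C ⊗[A] A')) :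
    Algebra.FiniteType A A' := by
  obtain ⟨SB, hSB, hSB_top⟩ := Algebra.FiniteType.exists_fg_baseChange_eq_top (R := A) (A := A') (B := B)
  obtain ⟨SC, hSC, hSC_top⟩ := Algebra.FiniteType.exists_fg_baseChange_eq_top (R := A) (A := A') (B := C)
  have h : Algebra.IsFiberProduct A B C K := hpull
  have hS_top : Subalgebra.toSubmodule (SB ⊔ SC) = ⊤ :=
    h.submodule_eq_top_of_baseChange_eq_top hsurj
      (Subalgebra.toSubmodule_baseChange_eq_top_of_le B le_sup_left hSB_top)
      (Subalgebra.toSubmodule_baseChange_eq_top_of_le C le_sup_right hSC_top)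
  exact ⟨Algebra.toSubmodule_eq_top.mp hS_top ▸ hSB.sup hSC⟩
end

section
/- Let B → K and C → K be ring homomorphisms with C → K surjective, A = B ×_K C, and let (M_B, M_C, M_K; α, β) be a triple where M_B is a B-module, M_C a C-module, M_K a K-module, with isomorphisms α : M_B ⊗_B K ≅ M_K and β : M_C ⊗_C K ≅ M_K. Set M = M_B ×_{M_K} M_C (fiber product of A-modules). Then the natural map M ⊗_A C → M_C is surjective. -/
/-!
Let `N ⊆ M_C` be the image of `M ⊗_A C → M_C`; it contains every `y` that glues with some `x ∈ M_B`.
Since `C → K` is surjective, every element of `K ⊗_C M_C` is some `1 ⊗ y`, so each `1 ⊗ x` is carried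
by `β⁻¹ ∘ α` into `K ⊗ N`, and hence so is all of `K ⊗_B M_B`. Thus for any `y ∈ M_C` there is
`z ∈ N` with `1 ⊗ y = 1 ⊗ z`, i.e. `(0, y - z)` lies in the fibre product, and `y = z + (y - z) ∈ N`.
-/

open TensorProduct

theorem Submodule.exists_mem_one_tmul_eq_of_mem_baseChange {R A M : Type*} [CommSemiring R]
    [Semiring A] [Algebra R A] [AddCommMonoid M] [Module R M]
    (hsurj : Function.Surjective (algebraMap R A)) {p : Submodule R M} {v : A ⊗[R] M}
    (hv : v ∈ p.baseChange A) : ∃ z ∈ p, (1 : A) ⊗ₜ[R] z = v := by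
  obtain ⟨w, rfl⟩ := hv
  obtain ⟨z, rfl⟩ := TensorProduct.mk_surjective R p A hsurj w
  exact ⟨z, z.2, rfl⟩

theorem TensorProduct.range_le_of_forall_one_tmul_mem {R A M P : Type*} [CommSemiring R]
    [CommSemiring A] [Algebra R A] [AddCommMonoid M] [Module R M] [AddCommMonoid P] [Module A P]
    (g : A ⊗[R] M →ₗ[A] P) {S : Submodule A P} (h : ∀ x : M, g ((1 : A) ⊗ₜ[R] x) ∈ S) :
    LinearMap.range g ≤ S := by
  rw [LinearMap.range_eq_map, ← Submodule.baseChange_top, Submodule.baseChange_eq_span,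
    Submodule.map_span, Submodule.span_le]
  rintro _ ⟨_, ⟨x, -, rfl⟩, rfl⟩
  exact h x

theorem symm_apply_mem_baseChange_of_glue {B C K MB MC MK : Type*} [CommRing B] [CommRing C]
    [CommRing K] [Algebra B K] [Algebra C K] (hsurj : Function.Surjective (algebraMap C K))
    [AddCommGroup MB] [Module B MB] [AddCommGroup MC] [Module C MC] [AddCommGroup MK] [Module K MK]
    (α : (K ⊗[B] MB) ≃ₗ[K] MK) (β : (K ⊗[C] MC) ≃ₗ[K] MK) {N : Submodule C MC}
    (hN : ∀ (x : MB) (y : MC), α ((1 : K) ⊗ₜ[B] x) = β ((1 : K) ⊗ₜ[C] y) → y ∈ N)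
    (v : K ⊗[B] MB) : β.symm (α v) ∈ N.baseChange K := by
  refine TensorProduct.range_le_of_forall_one_tmul_mem (β.symm.toLinearMap ∘ₗ α.toLinearMap)
    (fun x ↦ ?_) ⟨v, rfl⟩
  obtain ⟨y, hy⟩ := TensorProduct.mk_surjective C MC K hsurj (β.symm (α ((1 : K) ⊗ₜ[B] x)))
  have hglue : α ((1 : K) ⊗ₜ[B] x) = β ((1 : K) ⊗ₜ[C] y) := by
    rw [← β.symm_apply_eq]
    exact hy.symm
  simpa [← hy] using Submodule.tmul_mem_baseChange_of_mem (1 : K) (hN x y hglue)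

theorem ferrand_glued_tensor_surjective_general
    (A B C K : Type*) [CommRing A] [CommRing B] [CommRing C] [CommRing K]
    [Algebra A C] [Algebra B K] [Algebra C K]
    (hsurj : Function.Surjective (algebraMap C K))
    (MB MC MK : Type*)
    [AddCommGroup MB] [Module B MB] [Module A MB]
    [AddCommGroup MC] [Module C MC] [Module A MC] [IsScalarTower A C MC]
    [AddCommGroup MK] [Module K MK]
    (α : (K ⊗[B] MB) ≃ₗ[K] MK) (β : (K ⊗[C] MC) ≃ₗ[K] MK)
    (M : Type*) [AddCommGroup M] [Module A M]
    (πB : M →ₗ[A] MB) (πC : M →ₗ[A] MC)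
    (hfib : ∀ (x : MB) (y : MC), α ((1 : K) ⊗ₜ[B] x) = β ((1 : K) ⊗ₜ[C] y) →
      ∃! m : M, πB m = x ∧ πC m = y) :
    Function.Surjective (LinearMap.liftBaseChange C πC : C ⊗[A] M →ₗ[C] MC) := by
  set N := LinearMap.range (LinearMap.liftBaseChange C πC : C ⊗[A] M →ₗ[C] MC)
  have hN (x : MB) (y : MC) (h : α ((1 : K) ⊗ₜ[B] x) = β ((1 : K) ⊗ₜ[C] y)) : y ∈ N := by
    obtain ⟨m, ⟨-, rfl⟩, -⟩ := hfib x y h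
    exact ⟨1 ⊗ₜ m, by simp⟩
  intro y
  obtain ⟨z, hzN, hz⟩ := Submodule.exists_mem_one_tmul_eq_of_mem_baseChange hsurj
    (symm_apply_mem_baseChange_of_glue hsurj α β hN (α.symm (β ((1 : K) ⊗ₜ[C] y))))
  rw [α.apply_symm_apply, β.symm_apply_apply] at hz
  have hyz : y - z ∈ N := hN 0 (y - z) (by simp [tmul_sub, hz])
  exact add_sub_cancel z y ▸ add_mem hzN hyz

/-- For a glued triple `(M_B, M_C, M_K; α, β)` over a Ferrand fiber product
`A = B ×_K C` and `M = M_B ×_{M_K} M_C`, the natural map `M ⊗_A C → M_C`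
is surjective. Here `M` is encoded by its pullback universal property via the
projections `πB`, `πC`. -/
theorem ferrand_glued_tensor_surjective
    (A B C K : Type*) [CommRing A] [CommRing B] [CommRing C] [CommRing K]
    [Algebra A B] [Algebra A C] [Algebra A K] [Algebra B K] [Algebra C K]
    [IsScalarTower A B K] [IsScalarTower A C K]
    (hsurj : Function.Surjective (algebraMap C K))
    (hpull : ∀ (b : B) (c : C), algebraMap B K b = algebraMap C K c →
      ∃! a : A, algebraMap A B a = b ∧ algebraMap A C a = c)
    (MB MC MK : Type*)
    [AddCommGroup MB] [Module B MB] [Module A MB] [IsScalarTower A B MB]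
    [AddCommGroup MC] [Module C MC] [Module A MC] [IsScalarTower A C MC]
    [AddCommGroup MK] [Module K MK]
    (α : (K ⊗[B] MB) ≃ₗ[K] MK) (β : (K ⊗[C] MC) ≃ₗ[K] MK)
    (M : Type*) [AddCommGroup M] [Module A M]
    (πB : M →ₗ[A] MB) (πC : M →ₗ[A] MC)
    (hcompat : ∀ m : M, α ((1 : K) ⊗ₜ[B] πB m) = β ((1 : K) ⊗ₜ[C] πC m))
    (hfib : ∀ (x : MB) (y : MC), α ((1 : K) ⊗ₜ[B] x) = β ((1 : K) ⊗ₜ[C] y) →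
      ∃! m : M, πB m = x ∧ πC m = y) :
    Function.Surjective (LinearMap.liftBaseChange C πC : C ⊗[A] M →ₗ[C] MC) :=
  ferrand_glued_tensor_surjective_general A B C K hsurj MB MC MK α β M πB πC hfib
end

section
/- Let K = k[x, x⁻¹], B = k[x], C = k[x,x⁻¹,y] with the k-algebra map C → K sending x to x and y to 0, and the inclusion B → K. Then the fiber product A = B ×_K C, identified with the subring {f ∈ k[x,x⁻¹,y] : f(x,0) ∈ k[x]} of C, is not a Noetherian ring. -/
open Polynomial LaurentPolynomial

/-!
Let `A = {p ∈ R[Y] : p(0) ∈ f(B)}` for a ring map `f : B → R`. Its ideal `I` of polynomials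
without constant term maps onto `R` by `g ↦ coeff g 1`, and since `coeff (c * g) 1 = c(0) * coeff g 1`
for `g ∈ I`, the images of generators of `I` generate `R` as a `B`-module. So if `A` is Noetherian,
`R` is finite over `B`. For `k[x] → k[x, x⁻¹]` this fails: by lying over, an integral extension
cannot invert the non-unit `x`.
-/

theorem RingHom.finite_of_isNoetherianRing_comap_evalRingHom_zero {B R : Type*} [CommRing B]
    [CommRing R] (f : B →+* R)
    (h : IsNoetherianRing (Subring.comap (evalRingHom (0 : R)) f.range)) : f.Finite := by
  set A := Subring.comap (evalRingHom (0 : R)) f.range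
  algebraize [f]
  obtain ⟨G, hG⟩ := (isNoetherianRing_iff_ideal_fg A).mp h
    (RingHom.ker ((evalRingHom 0).comp A.subtype))
  have coeff_one_mem : ∀ g ∈ Ideal.span (G : Set A),
      (g : R[X]).coeff 1 ∈ Submodule.span B ((fun g : A ↦ (g : R[X]).coeff 1) '' G) := by
    intro g hg
    induction hg using Submodule.span_induction with
    | mem g hg => exact Submodule.subset_span ⟨g, hg, rfl⟩
    | zero => simp
    | add g g' _ _ ih ih' => simpa using add_mem ih ih'
    | smul c g hg ih =>
      obtain ⟨b, hb⟩ : (c : R[X]).coeff 0 ∈ f.range := by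
        rw [coeff_zero_eq_eval_zero]
        exact c.2
      have hg0 : (g : R[X]).coeff 0 = 0 := by
        have hg : g ∈ RingHom.ker ((evalRingHom 0).comp A.subtype) := hG ▸ hg
        simpa [coeff_zero_eq_eval_zero] using hg
      rw [smul_eq_mul, Subring.coe_mul, mul_coeff_one, hg0, mul_zero, add_zero, ← hb]
      exact Submodule.smul_mem _ b ih
  classical
  refine ⟨⟨G.image fun g : A ↦ (g : R[X]).coeff 1, eq_top_iff.2 fun r _ ↦ ?_⟩⟩
  let y : A := ⟨Polynomial.C r * X, by simp [A]⟩
  have hy : y ∈ Ideal.span (G : Set A) := by simp [hG, y]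
  simpa [y] using coeff_one_mem y hy

theorem Polynomial.toLaurent_not_finite {R : Type*} [CommRing R] [Nontrivial R] :
    ¬ (toLaurent : R[X] →+* R[T;T⁻¹]).Finite := by
  intro hfin
  have hX : Ideal.span {(X : R[X])} = ⊤ := by
    refine (Ideal.map_eq_top_iff _ toLaurent_injective hfin.to_isIntegral).1 ?_
    rw [Ideal.map_span, Set.image_singleton, toLaurent_X]
    exact Ideal.span_singleton_eq_top.2 (isUnit_T 1)
  exact not_isUnit_X (Ideal.span_singleton_eq_top.1 hX)

/-- The fiber product `A = k[x] ×_{k[x,x⁻¹]} k[x,x⁻¹,y]` (with `y ↦ 0`),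
identified with the subring `{f ∈ k[x,x⁻¹,y] : f(x,0) ∈ k[x]}`,
is not Noetherian. -/
theorem ferrand_example_not_noetherian (k : Type*) [Field k] :
    ¬ IsNoetherianRing
      (Subring.comap (Polynomial.evalRingHom (0 : LaurentPolynomial k))
        (Polynomial.toLaurent : k[X] →+* LaurentPolynomial k).range) :=
  fun h ↦ toLaurent_not_finite (RingHom.finite_of_isNoetherianRing_comap_evalRingHom_zero _ h)
end

section
/- Let k be a field, B = k[x]_(x), K = k(x), C = K[y]_(y) with C → K reduction mod y, and A = B ×_K C. Let I = yC = Ker(A → B) be the conductor. Then I is not finitely generated as an ideal of A. -/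
open Polynomial

/-- The canonical map from `B = k[x]_(x)` to its fraction field `K = k(x)`. -/
noncomputable def dvrToFracField (k : Type*) [Field k]
    [hp : (Ideal.span {(X : k[X])}).IsPrime] :
    Localization.AtPrime (Ideal.span {(X : k[X])}) →+* RatFunc k :=
  IsLocalization.map (M := (Ideal.span {(X : k[X])}).primeCompl)
    (T := nonZeroDivisors k[X]) (RatFunc k) (RingHom.id k[X])
    (by
      intro x hx
      exact mem_nonZeroDivisors_of_ne_zero (fun h => hx (h ▸ Ideal.zero_mem _)))

/-- The residue map `C = K[y]_(y) → K`, reduction modulo `y`. -/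
noncomputable def resModY (k : Type*) [Field k]
    [hq : (Ideal.span {(X : (RatFunc k)[X])}).IsPrime] :
    Localization.AtPrime (Ideal.span {(X : (RatFunc k)[X])}) →+* RatFunc k :=
  IsLocalization.lift (M := (Ideal.span {(X : (RatFunc k)[X])}).primeCompl)
    (g := Polynomial.evalRingHom (0 : RatFunc k))
    (fun y => isUnit_iff_ne_zero.mpr fun h => y.2 (Ideal.mem_span_singleton.mpr
      (Polynomial.X_dvd_iff.mpr (by rw [Polynomial.coeff_zero_eq_eval_zero]; simpa using h))))

/-- `A = B ×_K C`, realized as the preimage of `B` under `C → K`. -/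
noncomputable def compositionRing (k : Type*) [Field k]
    [hp : (Ideal.span {(X : k[X])}).IsPrime]
    [hq : (Ideal.span {(X : (RatFunc k)[X])}).IsPrime] :
    Subring (Localization.AtPrime (Ideal.span {(X : (RatFunc k)[X])})) :=
  Subring.comap (resModY k) (dvrToFracField k).range

/-! If `I = yC` were generated by `y g₁, …, y gₙ` as an ideal of `A`, then cancelling the
non-zero-divisor `y` writes every `c ∈ C` as an `A`-combination of the `gᵢ`; reducing mod `y`
makes `K` a finitely generated, hence integral, `B`-module. A subring over which a field is
integral is itself a field, but `x ∈ B` while `x⁻¹ ∉ B`. -/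

section Pullback

variable {C K : Type*} [CommRing C]

theorem Subring.module_finite_of_fg_comap_span_singleton [CommRing K] {φ : C →+* K}
    (hφ : Function.Surjective φ) (B : Subring K) {y : C} (hy : y ∈ nonZeroDivisors C)
    (hφy : φ y = 0) (hfg : ((Ideal.span {y}).comap (B.comap φ).subtype).FG) :
    Module.Finite B K := by
  classical
  obtain ⟨S, hS⟩ := hfg
  have hdvd (a : B.comap φ) : ∃ g : C, a ∈ S → (a : C) = y * g := by
    by_cases ha : a ∈ S
    · have : a ∈ Ideal.span (S : Set (B.comap φ)) := Ideal.subset_span ha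
      rw [hS, Ideal.mem_comap, Ideal.mem_span_singleton] at this
      exact this.imp fun _ h _ => h
    · exact ⟨0, fun h => absurd h ha⟩
  choose g hg using hdvd
  refine ⟨⟨S.image (φ ∘ g), Submodule.eq_top_iff'.mpr fun c => ?_⟩⟩
  obtain ⟨c, rfl⟩ := hφ c
  have hyc : (⟨y * c, by simp [hφy]⟩ : B.comap φ) ∈ Ideal.span (S : Set (B.comap φ)) := by
    rw [hS, Ideal.mem_comap, Ideal.mem_span_singleton]
    exact dvd_mul_right y c
  obtain ⟨f, -, hf⟩ := Submodule.mem_span_finset.mp hyc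
  have hc : c = ∑ a ∈ S, (f a : C) * g a := by
    rw [← mul_cancel_left_mem_nonZeroDivisors hy, Finset.mul_sum]
    calc y * c = ∑ a ∈ S, (f a : C) * a := by simpa using (congrArg Subtype.val hf).symm
      _ = ∑ a ∈ S, y * ((f a : C) * g a) :=
        Finset.sum_congr rfl fun a ha => by rw [hg a ha]; ring
  rw [hc, map_sum]
  refine Submodule.sum_mem _ fun a ha => ?_
  rw [map_mul]
  exact Submodule.smul_mem _ (⟨φ (f a), (f a).2⟩ : B)
    (Submodule.subset_span (Finset.mem_image_of_mem _ ha))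

theorem Subring.inv_mem_of_module_finite [Field K] (B : Subring K) [Module.Finite B K] {b : K}
    (hb : b ∈ B) : b⁻¹ ∈ B := by
  obtain rfl | hb0 := eq_or_ne b 0
  · simp
  have hB : IsField B := isField_of_isIntegral_of_isField Subtype.val_injective (Field.toIsField K)
  obtain ⟨c, hc⟩ := hB.mul_inv_cancel (a := ⟨b, hb⟩) (by simpa [Subtype.ext_iff] using hb0)
  rw [inv_eq_of_mul_eq_one_right (congrArg Subtype.val hc)]
  exact c.2

end Pullback

section CompositionRing

variable (k : Type*) [Field k]

theorem dvrToFracField_mk' [(Ideal.span {(X : k[X])}).IsPrime] (p : k[X])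
    (s : (Ideal.span {(X : k[X])}).primeCompl) :
    dvrToFracField k (IsLocalization.mk' _ p s) =
      algebraMap k[X] (RatFunc k) p / algebraMap k[X] (RatFunc k) s :=
  (IsLocalization.map_mk' _ _ _).trans (IsFractionRing.mk'_eq_div _)

theorem algebraMap_X_mem_range_dvrToFracField [(Ideal.span {(X : k[X])}).IsPrime] :
    algebraMap k[X] (RatFunc k) X ∈ (dvrToFracField k).range :=
  ⟨algebraMap k[X] _ X, IsLocalization.map_eq _ _⟩

theorem inv_algebraMap_X_not_mem_range_dvrToFracField [(Ideal.span {(X : k[X])}).IsPrime] :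
    (algebraMap k[X] (RatFunc k) X)⁻¹ ∉ (dvrToFracField k).range := by
  rintro ⟨b, hb⟩
  obtain ⟨p, s, rfl⟩ := IsLocalization.exists_mk'_eq (Ideal.span {(X : k[X])}).primeCompl b
  have hs : algebraMap k[X] (RatFunc k) s ≠ 0 :=
    IsFractionRing.to_map_ne_zero_of_mem_nonZeroDivisors
      (Ideal.primeCompl_le_nonZeroDivisors _ s.2)
  have hX : algebraMap k[X] (RatFunc k) X ≠ 0 :=
    IsFractionRing.to_map_ne_zero_of_mem_nonZeroDivisors (mem_nonZeroDivisors_of_ne_zero X_ne_zero)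
  rw [dvrToFracField_mk', div_eq_iff hs, eq_comm, inv_mul_eq_iff_eq_mul₀ hX, ← map_mul] at hb
  exact s.2 (Ideal.mem_span_singleton.mpr ⟨p, IsFractionRing.injective k[X] (RatFunc k) hb⟩)

theorem resModY_algebraMap [(Ideal.span {(X : (RatFunc k)[X])}).IsPrime] (p : (RatFunc k)[X]) :
    resModY k (algebraMap _ _ p) = p.eval 0 :=
  IsLocalization.lift_eq _ p

theorem resModY_surjective [(Ideal.span {(X : (RatFunc k)[X])}).IsPrime] :
    Function.Surjective (resModY k) :=
  fun c => ⟨algebraMap _ _ (Polynomial.C c), by rw [resModY_algebraMap, eval_C]⟩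

end CompositionRing

/-- The conductor `I = yC = Ker(A → B)` of the composition
`A = B ×_K C` of the two discrete valuation rings `B = k[x]_(x)` and
`C = K[y]_(y)`, viewed as an ideal of `A ⊆ C`, is not finitely generated. -/
theorem composition_conductor_not_fg (k : Type*) [Field k]
    [hp : (Ideal.span {(X : k[X])}).IsPrime]
    [hq : (Ideal.span {(X : (RatFunc k)[X])}).IsPrime] :
    ¬ (Ideal.comap (compositionRing k).subtype
        (Ideal.span {algebraMap ((RatFunc k)[X])
          (Localization.AtPrime (Ideal.span {(X : (RatFunc k)[X])})) X})).FG := by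
  intro hfg
  have hy : algebraMap ((RatFunc k)[X])
      (Localization.AtPrime (Ideal.span {(X : (RatFunc k)[X])})) X ∈ nonZeroDivisors _ :=
    IsLocalization.nonZeroDivisors_le_comap (Ideal.span {(X : (RatFunc k)[X])}).primeCompl _
      (mem_nonZeroDivisors_of_ne_zero X_ne_zero)
  have : Module.Finite (dvrToFracField k).range (RatFunc k) :=
    Subring.module_finite_of_fg_comap_span_singleton (resModY_surjective k) _ hy
      (by rw [resModY_algebraMap, eval_X]) hfg
  exact inv_algebraMap_X_not_mem_range_dvrToFracField k
    (Subring.inv_mem_of_module_finite _ (algebraMap_X_mem_range_dvrToFracField k))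
end

section
/- Let B → K and C → K be ring homomorphisms with C → K surjective and A = B ×_K C, with conductor I = Ker(A → B). Let R be a valuation ring that is not a field, with fraction field F and maximal ideal m_R. Suppose φ : A → R is a ring homomorphism such that the radical of the ideal generated by φ(I) in R equals m_R. Then for every factorization of A → F through C → F (a ring homomorphism ψ : C → F with ψ restricted to A equal to the composite A → R → F) and every c ∈ C, one has ψ(c) ∈ R. -/
/-- Key step of Lemma 3.3.4: given a Ferrand fiber product `A = B ×_K C` with
conductor `I`, a valuation ring `R` of nonzero height with fraction field `F`,
and `φ : A → R` with `√(IR) = m_R`, any factorization `ψ : C → F` of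
`A → R → F` through `C` lands inside `R`. -/
theorem ferrand_valuation_lifting
    (A B C K : Type*) [CommRing A] [CommRing B] [CommRing C] [CommRing K]
    [Algebra A B] [Algebra A C] [Algebra A K] [Algebra B K] [Algebra C K]
    [IsScalarTower A B K] [IsScalarTower A C K]
    (hsurj : Function.Surjective (algebraMap C K))
    (hpull : ∀ (b : B) (c : C), algebraMap B K b = algebraMap C K c →
      ∃! a : A, algebraMap A B a = b ∧ algebraMap A C a = c)
    (R : Type*) [CommRing R] [IsDomain R] [ValuationRing R]
    (hR : ¬ IsField R)
    (F : Type*) [Field F] [Algebra R F] [IsFractionRing R F]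
    (φ : A →+* R)
    (hrad : (Ideal.map φ (RingHom.ker (algebraMap A B))).radical =
      IsLocalRing.maximalIdeal R)
    (ψ : C →+* F)
    (hψ : ∀ a : A, ψ (algebraMap A C a) = algebraMap R F (φ a)) :
    ∀ c : C, ∃ r : R, algebraMap R F r = ψ c := by
  intro c
  by_contra hc
  push_neg at hc
  set x := ψ c with hxdef
  -- Key conductor step: for `a` in the conductor, `φ(a) • x` is again of the form
  -- `φ(a')` for some `a'` in the conductor.
  have key : ∀ a : A, algebraMap A B a = 0 → ∃ a' : A, algebraMap A B a' = 0 ∧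
      algebraMap R F (φ a) * x = algebraMap R F (φ a') := by
    intro a ha
    have hCK : algebraMap C K (algebraMap A C a) = 0 := by
      rw [← IsScalarTower.algebraMap_apply, IsScalarTower.algebraMap_apply A B K, ha, map_zero]
    have hk : algebraMap B K 0 = algebraMap C K (algebraMap A C a * c) := by
      rw [map_zero, map_mul, hCK, zero_mul]
    obtain ⟨a', ⟨ha'B, ha'C⟩, -⟩ := hpull 0 (algebraMap A C a * c) hk
    refine ⟨a', ha'B, ?_⟩
    rw [← hψ, ← hψ, ha'C, map_mul]
  -- Iterate the key step: multiplication by `x ^ m`.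
  have keyn : ∀ m : ℕ, ∀ a : A, algebraMap A B a = 0 → ∃ a' : A,
      algebraMap A B a' = 0 ∧ algebraMap R F (φ a) * x ^ m = algebraMap R F (φ a') := by
    intro m
    induction m with
    | zero => intro a ha; exact ⟨a, ha, by simp⟩
    | succ m ih =>
      intro a ha
      obtain ⟨a₁, ha₁, he⟩ := key a ha
      obtain ⟨a', ha', he'⟩ := ih a₁ ha₁
      refine ⟨a', ha', ?_⟩
      rw [pow_succ', ← mul_assoc, he, he']
  have hx0 : x ≠ 0 := fun h => hc 0 (by rw [map_zero, h])
  -- Since `x ∉ R`, `x⁻¹ ∈ R` by the valuation property.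
  obtain ⟨r, hr⟩ : ∃ r : R, algebraMap R F r = x⁻¹ := by
    rcases ValuationRing.isInteger_or_isInteger R x with ⟨r, hr⟩ | ⟨r, hr⟩
    · exact absurd hr (hc r)
    · exact ⟨r, hr⟩
  -- `r` is not a unit, hence lies in the maximal ideal.
  have hrunit : ¬ IsUnit r := by
    intro hu
    obtain ⟨s, hs⟩ := hu.exists_right_inv
    refine hc s ?_
    have : algebraMap R F r * algebraMap R F s = 1 := by rw [← map_mul, hs, map_one]
    rw [hr] at this
    field_simp at this
    rw [this]
  have hrm : r ∈ IsLocalRing.maximalIdeal R := hrunit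
  rw [← hrad] at hrm
  obtain ⟨n, hn⟩ := hrm
  -- Every element of `I·R` times `x ^ (n+1)` lies in `R`.
  have hspan : ∀ t ∈ Ideal.map φ (RingHom.ker (algebraMap A B)),
      ∃ s : R, algebraMap R F t * x ^ (n + 1) = algebraMap R F s := by
    intro t ht
    have ht' : t ∈ Ideal.span (φ '' (RingHom.ker (algebraMap A B))) := ht
    clear ht
    induction ht' using Submodule.span_induction with
    | mem y hy =>
      obtain ⟨a, ha, rfl⟩ := hy
      obtain ⟨a', _, he⟩ := keyn (n + 1) a ha
      exact ⟨φ a', he⟩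
    | zero => exact ⟨0, by simp⟩
    | add y z _ _ hy hz =>
      obtain ⟨sy, hsy⟩ := hy
      obtain ⟨sz, hsz⟩ := hz
      exact ⟨sy + sz, by rw [map_add, add_mul, hsy, hsz, map_add]⟩
    | smul u y _ hy =>
      obtain ⟨sy, hsy⟩ := hy
      refine ⟨u * sy, ?_⟩
      rw [smul_eq_mul, map_mul, mul_assoc, hsy, map_mul]
  obtain ⟨s, hs⟩ := hspan _ hn
  refine hc s ?_
  have hinv : algebraMap R F r * x = 1 := by rw [hr, inv_mul_cancel₀ hx0]
  have : algebraMap R F (r ^ n) * x ^ (n + 1) = x := by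
    rw [map_pow, pow_succ']
    calc (algebraMap R F r) ^ n * (x * x ^ n)
        = x * ((algebraMap R F r * x) ^ n) := by ring
      _ = x := by rw [hinv, one_pow, mul_one]
  rw [← hs, this]
end

section
/- Let B → K and C → K be ring homomorphisms with C → K surjective, A = B ×_K C. If M is an A-module such that M ⊗_A B is a flat B-module, M ⊗_A C is a flat C-module, and the natural map M → (M ⊗_A B) ×_{M ⊗_A K} (M ⊗_A C) is an isomorphism, and moreover M ⊗_A B is finitely generated over B and M ⊗_A C is finitely generated over C, then M is a finitely generated A-module. -/
/-! Choose finitely many `mᵢ ∈ M` whose images generate both `B ⊗ M` and `C ⊗ M`, and write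
`1 ⊗ x = ∑ bᵢ ⊗ mᵢ` in `B ⊗ M`. By right exactness of `⊗ M`, the kernel of `C ⊗ M → K ⊗ M` is
`ker (C → K) • (C ⊗ M)`; as `C → K` is surjective, `1 ⊗ x` therefore has coefficients `cᵢ` over `C`
with the same images in `K` as the `bᵢ`. The fiber product glues `bᵢ` and `cᵢ` to `aᵢ ∈ A`, and
`x = ∑ aᵢ • mᵢ` because `M` embeds into `(B ⊗ M) × (C ⊗ M)`. -/

open TensorProduct

namespace TensorProduct

variable {A : Type*} {M : Type*} [CommRing A] [AddCommGroup M] [Module A M]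

section BaseChange

variable (B : Type*) [CommRing B] [Algebra A B]

theorem span_range_one_tmul_eq_top :
    Submodule.span B (Set.range fun m : M => (1 : B) ⊗ₜ[A] m) = ⊤ := by
  rw [← Submodule.baseChange_top (R := A) B, Submodule.baseChange_eq_span, Submodule.map_top,
    LinearMap.coe_range]
  rfl

theorem exists_finset_span_one_tmul_eq_top [Module.Finite B (B ⊗[A] M)] :
    ∃ s : Finset M, Submodule.span B ((fun m : M => (1 : B) ⊗ₜ[A] m) '' s) = ⊤ := by
  classical
  obtain ⟨t, hts, ht⟩ := (Submodule.fg_span_iff_fg_span_finset_subset _).1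
    (span_range_one_tmul_eq_top B (A := A) (M := M) ▸ Module.Finite.fg_top)
  obtain ⟨s, -, rfl⟩ := Finset.subset_set_image_iff.1 (Set.image_univ ▸ hts)
  exact ⟨s, by rw [← Finset.coe_image, ← ht, span_range_one_tmul_eq_top]⟩

variable {B}

theorem exists_sum_tmul_eq_of_span_eq_top {ι : Type*} [Fintype ι] {m : ι → M}
    (hm : Submodule.span B (Set.range fun i => (1 : B) ⊗ₜ[A] m i) = ⊤) (t : B ⊗[A] M) :
    ∃ b : ι → B, ∑ i, b i ⊗ₜ[A] m i = t := by
  obtain ⟨b, hb⟩ := (Submodule.mem_span_range_iff_exists_fun B).1 (hm ▸ Submodule.mem_top (x := t))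
  exact ⟨b, by simpa only [smul_tmul', smul_eq_mul, mul_one] using hb⟩

theorem one_tmul_sum_smul {ι : Type*} [Fintype ι] (a : ι → A) (m : ι → M) :
    (1 : B) ⊗ₜ[A] ∑ i, a i • m i = ∑ i, algebraMap A B (a i) ⊗ₜ[A] m i := by
  simp only [tmul_sum, tmul_smul, smul_tmul', ← Algebra.algebraMap_eq_smul_one]

end BaseChange

variable {B C K : Type*} [CommRing B] [CommRing C] [CommRing K] [Algebra A B] [Algebra A C]
  [Algebra A K] [Algebra B K] [Algebra C K] [IsScalarTower A B K] [IsScalarTower A C K]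

theorem ker_rTensor_le_ker_smul_top (hsurj : Function.Surjective (algebraMap C K)) :
    LinearMap.ker ((IsScalarTower.toAlgHom A C K).toLinearMap.rTensor M) ≤
      (RingHom.ker (algebraMap C K) • (⊤ : Submodule C (C ⊗[A] M))).restrictScalars A := by
  intro z hz
  obtain ⟨w, rfl⟩ := (rTensor_exact M (LinearMap.exact_subtype_ker_map _) hsurj z).1 hz
  clear hz
  induction w using TensorProduct.induction_on with
  | zero => simp
  | tmul c m =>
    have hc : algebraMap C K c = 0 := LinearMap.mem_ker.1 c.2
    rw [LinearMap.rTensor_tmul, Submodule.subtype_apply, ← mul_one (c : C), ← smul_eq_mul,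
      ← smul_tmul', Submodule.restrictScalars_mem]
    exact Submodule.smul_mem_smul hc Submodule.mem_top
  | add u v hu hv => rw [map_add]; exact add_mem hu hv

theorem exists_sum_tmul_eq_of_rTensor_eq (hsurj : Function.Surjective (algebraMap C K))
    {ι : Type*} [Fintype ι] {m : ι → M}
    (hm : Submodule.span C (Set.range fun i => (1 : C) ⊗ₜ[A] m i) = ⊤) (k : ι → K)
    (z : C ⊗[A] M)
    (hz : (IsScalarTower.toAlgHom A C K).toLinearMap.rTensor M z = ∑ i, k i ⊗ₜ[A] m i) :
    ∃ c : ι → C, (∀ i, algebraMap C K (c i) = k i) ∧ ∑ i, c i ⊗ₜ[A] m i = z := by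
  choose c₀ hc₀ using fun i => hsurj (k i)
  have hker : z - ∑ i, c₀ i ⊗ₜ[A] m i ∈
      RingHom.ker (algebraMap C K) • Submodule.span C (Set.range fun i => (1 : C) ⊗ₜ[A] m i) := by
    rw [hm]
    apply ker_rTensor_le_ker_smul_top hsurj
    simp [hz, hc₀]
  obtain ⟨f, hf, hfz⟩ := (Submodule.mem_ideal_smul_span_iff_exists_sum _ _ _).1 hker
  refine ⟨c₀ + f, fun i => by simpa [hc₀] using hf i, ?_⟩
  rw [Finsupp.sum_fintype _ _ (by simp)] at hfz
  simp only [Pi.add_apply, add_tmul, Finset.sum_add_distrib]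
  simp only [smul_tmul', smul_eq_mul, mul_one] at hfz
  rw [hfz, add_sub_cancel]

theorem span_eq_top_of_span_one_tmul_eq_top (hsurj : Function.Surjective (algebraMap C K))
    (hpull : ∀ (b : B) (c : C), algebraMap B K b = algebraMap C K c →
      ∃ a : A, algebraMap A B a = b ∧ algebraMap A C a = c)
    (hinj : ∀ x y : M, (1 : B) ⊗ₜ[A] x = (1 : B) ⊗ₜ[A] y → (1 : C) ⊗ₜ[A] x = (1 : C) ⊗ₜ[A] y →
      x = y)
    {s : Set M} [Fintype s]
    (hB : Submodule.span B ((fun m : M => (1 : B) ⊗ₜ[A] m) '' s) = ⊤)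
    (hC : Submodule.span C ((fun m : M => (1 : C) ⊗ₜ[A] m) '' s) = ⊤) :
    Submodule.span A s = ⊤ := by
  rw [Set.image_eq_range] at hB hC
  refine Submodule.eq_top_iff'.2 fun x => ?_
  obtain ⟨b, hb⟩ := exists_sum_tmul_eq_of_span_eq_top hB ((1 : B) ⊗ₜ[A] x)
  obtain ⟨c, hcb, hc⟩ := exists_sum_tmul_eq_of_rTensor_eq hsurj hC
    (fun i => algebraMap B K (b i)) ((1 : C) ⊗ₜ[A] x) <| by
      have := congrArg ((IsScalarTower.toAlgHom A B K).toLinearMap.rTensor M) hb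
      simpa using this.symm
  choose a ha using fun i => hpull (b i) (c i) (hcb i).symm
  have hx : ∑ i, a i • (i : M) = x := hinj _ _
    (by rw [one_tmul_sum_smul, ← hb]; simp only [fun i => (ha i).1])
    (by rw [one_tmul_sum_smul, ← hc]; simp only [fun i => (ha i).2])
  rw [← Subtype.range_coe (s := s)]
  exact (Submodule.mem_span_range_iff_exists_fun A).2 ⟨a, hx⟩

end TensorProduct

theorem ferrand_glued_flat_module_finite_general
    (A B C K : Type*) [CommRing A] [CommRing B] [CommRing C] [CommRing K]
    [Algebra A B] [Algebra A C] [Algebra A K] [Algebra B K] [Algebra C K]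
    [IsScalarTower A B K] [IsScalarTower A C K]
    (hsurj : Function.Surjective (algebraMap C K))
    (hpull : ∀ (b : B) (c : C), algebraMap B K b = algebraMap C K c →
      ∃! a : A, algebraMap A B a = b ∧ algebraMap A C a = c)
    (M : Type*) [AddCommGroup M] [Module A M]
    (hBfin : Module.Finite B (B ⊗[A] M))
    (hCfin : Module.Finite C (C ⊗[A] M))
    (hiso : ∀ (x : B ⊗[A] M) (y : C ⊗[A] M),
      LinearMap.rTensor M (IsScalarTower.toAlgHom A B K).toLinearMap x =
        LinearMap.rTensor M (IsScalarTower.toAlgHom A C K).toLinearMap y →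
      ∃! m : M, (1 : B) ⊗ₜ[A] m = x ∧ (1 : C) ⊗ₜ[A] m = y) :
    Module.Finite A M := by
  classical
  have hinj (x y : M) (hB : (1 : B) ⊗ₜ[A] x = (1 : B) ⊗ₜ[A] y)
      (hC : (1 : C) ⊗ₜ[A] x = (1 : C) ⊗ₜ[A] y) : x = y := by
    obtain ⟨_, _, huniq⟩ := hiso ((1 : B) ⊗ₜ[A] x) ((1 : C) ⊗ₜ[A] x) (by simp)
    exact (huniq x ⟨rfl, rfl⟩).trans (huniq y ⟨hB.symm, hC.symm⟩).symm
  obtain ⟨sB, hsB⟩ := exists_finset_span_one_tmul_eq_top (A := A) B (M := M)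
  obtain ⟨sC, hsC⟩ := exists_finset_span_one_tmul_eq_top (A := A) C (M := M)
  refine ⟨⟨sB ∪ sC, span_eq_top_of_span_one_tmul_eq_top hsurj (fun b c h => (hpull b c h).exists)
    hinj ?_ ?_⟩⟩
  · exact eq_top_mono (Submodule.span_mono (Set.image_mono Finset.subset_union_left)) hsB
  · exact eq_top_mono (Submodule.span_mono (Set.image_mono Finset.subset_union_right)) hsC

/-- Descent of finite generation for glued flat modules through a Ferrand
fiber product: if `B ⊗_A M` and `C ⊗_A M` are flat and finitely generated and
`M → (B ⊗_A M) ×_{K ⊗_A M} (C ⊗_A M)` is an isomorphism, then `M` is a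
finitely generated `A`-module. -/
theorem ferrand_glued_flat_module_finite
    (A B C K : Type*) [CommRing A] [CommRing B] [CommRing C] [CommRing K]
    [Algebra A B] [Algebra A C] [Algebra A K] [Algebra B K] [Algebra C K]
    [IsScalarTower A B K] [IsScalarTower A C K]
    (hsurj : Function.Surjective (algebraMap C K))
    (hpull : ∀ (b : B) (c : C), algebraMap B K b = algebraMap C K c →
      ∃! a : A, algebraMap A B a = b ∧ algebraMap A C a = c)
    (M : Type*) [AddCommGroup M] [Module A M]
    (hBflat : Module.Flat B (B ⊗[A] M)) (hBfin : Module.Finite B (B ⊗[A] M))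
    (hCflat : Module.Flat C (C ⊗[A] M)) (hCfin : Module.Finite C (C ⊗[A] M))
    (hiso : ∀ (x : B ⊗[A] M) (y : C ⊗[A] M),
      LinearMap.rTensor M (IsScalarTower.toAlgHom A B K).toLinearMap x =
        LinearMap.rTensor M (IsScalarTower.toAlgHom A C K).toLinearMap y →
      ∃! m : M, (1 : B) ⊗ₜ[A] m = x ∧ (1 : C) ⊗ₜ[A] m = y) :
    Module.Finite A M :=
  ferrand_glued_flat_module_finite_general A B C K hsurj hpull M hBfin hCfin hiso
end

section
/- Let B → K and C → K be ring homomorphisms with C → K surjective and A = B ×_K C. Let M_B be a flat B-module, M_C a flat C-module, and fix an isomorphism of K-modules θ : M_B ⊗_B K ≅ M_C ⊗_C K. Define M = M_B ×_{M_C ⊗_C K} M_C (fiber product of A-modules along the maps M_B → M_B ⊗_B K ≅ M_C ⊗_C K ← M_C). Then M is a flat A-module. -/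
/-!
We check the equational criterion: every relation `∑ fᵢ xᵢ = 0` in `M` is trivial.

Since `C → K` is onto, `π_B` is onto and `π_C (M)` spans `M_C`. Trivializing the relation over
`C` with generators `π_C Z_p` and base changing to `K` expresses each `1 ⊗ π_B xᵢ` as a
`K`-combination of the `1 ⊗ π_B Z_p`. Flatness of `M_B`, applied to these identities together with
the relation over `B`, yields a trivialization over `B` whose coefficients agree in `K` with
coefficients from `C`, so that they glue to coefficients in `A = B ×_K C`. This trivializes the
relation up to a relation among elements of `ker π_B`, whose images in `M_C` die in `K ⊗_C M_C`.
Such a relation is trivialized over `C` with coefficients in `J = ker (C → K)`, and those lift to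
`A` as the pairs `(0, j)`.
-/

open TensorProduct

theorem Submodule.exists_fin_sum_smul_of_forall_mem_span_range {R N X : Type*} [Semiring R]
    [AddCommMonoid N] [Module R N] {g : X → N} {κ : Type*} [Fintype κ] {w : κ → N}
    (hw : ∀ t, w t ∈ span R (Set.range g)) :
    ∃ (n : ℕ) (c : κ → Fin n → R) (X' : Fin n → X), ∀ t, w t = ∑ r, c t r • g (X' r) := by
  classical
  choose c hc using fun t => Finsupp.mem_span_range_iff_exists_finsupp.mp (hw t)
  let T := Finset.univ.biUnion fun t => (c t).support
  refine ⟨T.card, fun t r => c t (T.equivFin.symm r), fun r => T.equivFin.symm r, fun t => ?_⟩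
  rw [← hc t, Finsupp.sum_of_support_subset _
    (Finset.subset_biUnion_of_mem (fun t => (c t).support) (Finset.mem_univ t)) _ (by simp),
    ← Finset.sum_coe_sort T]
  exact (Equiv.sum_comp T.equivFin.symm _).symm

namespace Module

variable {R N : Type*} [CommRing R] [AddCommGroup N] [Module R N]

theorem IsTrivialRelation.add {ι : Type*} [Fintype ι] {f : ι → R} {x x' : ι → N}
    (h : IsTrivialRelation f x) (h' : IsTrivialRelation f x') :
    IsTrivialRelation f (x + x') := by
  obtain ⟨k, a, y, hy, ha⟩ := h
  obtain ⟨k', a', y', hy', ha'⟩ := h'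
  rw [isTrivialRelation_iff_vanishesTrivially]
  refine .of_fintype (fun i => Sum.elim (a i) (a' i)) (Sum.elim y y') (fun i => ?_) ?_
  · simp [Fintype.sum_sum_type, hy, hy']
  · rintro (j | j)
    · simpa [mul_comm] using ha j
    · simpa [mul_comm] using ha' j

theorem exists_trivialization_in_range_of_span_eq_top {X : Type*} {g : X → N}
    (hg : Submodule.span R (Set.range g) = ⊤) (J : Ideal R) {ι κ : Type*} [Fintype ι]
    [Fintype κ] {f : ι → R} {x : ι → N} {a : ι → κ → R} {y : κ → N}
    (hx : ∀ i, x i = ∑ j, a i j • y j) (hfa : ∀ j, ∑ i, f i * a i j = 0)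
    (haJ : ∀ i j, a i j ∈ J) :
    ∃ (n : ℕ) (c : ι → Fin n → R) (X' : Fin n → X), (∀ i, x i = ∑ r, c i r • g (X' r)) ∧
      (∀ r, ∑ i, f i * c i r = 0) ∧ ∀ i r, c i r ∈ J := by
  obtain ⟨n, b, X', hb⟩ := Submodule.exists_fin_sum_smul_of_forall_mem_span_range (w := y)
    fun j => hg ▸ Submodule.mem_top
  refine ⟨n, fun i r => ∑ j, a i j * b j r, X', fun i => ?_, fun r => ?_,
    fun i r => J.sum_mem fun j _ => J.mul_mem_right _ (haJ i j)⟩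
  · simp only [hx, hb, Finset.smul_sum, smul_smul, Finset.sum_smul]
    exact Finset.sum_comm
  · simp only [Finset.mul_sum]
    rw [Finset.sum_comm]
    simp only [← mul_assoc, ← Finset.sum_mul, hfa, zero_mul, Finset.sum_const_zero]

theorem Flat.exists_trivialization_of_one_tmul_eq_sum {S : Type*} [CommRing S] [Algebra R S]
    [Flat R N] {ι P : Type*} [Fintype ι] [Fintype P] {f : ι → R} {x : ι → N}
    (hfx : ∑ i, f i • x i = 0) (σ : ι → P → S) (z : P → N)
    (hσ : ∀ i, (1 : S) ⊗ₜ[R] x i = ∑ p, σ i p ⊗ₜ[R] z p) :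
    ∃ (k : ℕ) (a : ι → Fin k → R) (a' : P → Fin k → R) (y : Fin k → N),
      (∀ i, x i = ∑ j, a i j • y j) ∧ (∀ j, ∑ i, f i * a i j = 0) ∧
      ∀ i j, algebraMap R S (a i j) = ∑ p, algebraMap R S (a' p j) * σ i p := by
  classical
  -- The relation and the identities in `S ⊗ N` are the components of one vanishing sum in
  -- `((ι → S) × R) ⊗ N`, and flatness makes that sum vanish trivially.
  let m : ι ⊕ P → (ι → S) × R :=
    Sum.elim (fun i => (Pi.single i 1, f i)) (fun p => (fun i => -σ i p, 0))
  have hm : ∑ u, m u ⊗ₜ[R] Sum.elim x z u = 0 := by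
    apply (prodLeft R R _ _ N).injective
    ext
    · apply (piLeft R N _).injective
      ext i
      simp [m, Fintype.sum_sum_type, Prod.fst_sum, Finset.sum_apply, Pi.single_apply, ite_tmul,
        neg_tmul, hσ]
    · apply (TensorProduct.lid R N).injective
      simpa [m, Fintype.sum_sum_type, Prod.snd_sum] using hfx
  obtain ⟨k, b, y, hy, hb⟩ := vanishesTrivially_of_sum_tmul_eq_zero_of_rTensor_injective R
    (Flat.rTensor_preserves_injective_linearMap _ (Submodule.injective_subtype _)) hm
  refine ⟨k, fun i => b (.inl i), fun p => b (.inr p), y, fun i => hy (.inl i), fun j => ?_,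
    fun i j => ?_⟩
  · simpa [m, Fintype.sum_sum_type, Prod.snd_sum, mul_comm] using congrArg Prod.snd (hb j)
  · have := congrFun (congrArg Prod.fst (hb j)) i
    simp [m, Fintype.sum_sum_type, Prod.fst_sum, Finset.sum_apply, Pi.single_apply,
      Algebra.smul_def] at this
    linear_combination this

theorem Flat.exists_trivialization_of_one_tmul_eq_zero {S : Type*} [CommRing S] [Algebra R S]
    [Flat R N] {ι : Type*} [Fintype ι] {f : ι → R} {x : ι → N} (hfx : ∑ i, f i • x i = 0)
    (hx : ∀ i, (1 : S) ⊗ₜ[R] x i = 0) :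
    ∃ (k : ℕ) (a : ι → Fin k → R) (y : Fin k → N), (∀ i, x i = ∑ j, a i j • y j) ∧
      (∀ j, ∑ i, f i * a i j = 0) ∧ ∀ i j, a i j ∈ RingHom.ker (algebraMap R S) := by
  obtain ⟨k, a, _, y, hy, ha, haS⟩ := exists_trivialization_of_one_tmul_eq_sum hfx
    (fun _ (_ : Fin 0) => (0 : S)) 0 (by simpa using hx)
  exact ⟨k, a, y, hy, ha, fun i j => by simpa using haS i j⟩

end Module

theorem LinearMap.map_smul_eq_algebraMap_smul {R S M N : Type*} [CommSemiring R] [Semiring S]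
    [Algebra R S] [AddCommMonoid M] [Module R M] [AddCommMonoid N] [Module R N] [Module S N]
    [IsScalarTower R S N] (f : M →ₗ[R] N) (r : R) (m : M) :
    f (r • m) = algebraMap R S r • f m := by
  rw [map_smul, algebraMap_smul]

namespace MilnorGluing

variable {A B C K : Type*} [CommRing A] [CommRing B] [CommRing C] [CommRing K]
  [Algebra B K] [Algebra C K] (hsurj : Function.Surjective (algebraMap C K))
  {MB MC : Type*} [AddCommGroup MB] [Module B MB] [Module A MB]
  [AddCommGroup MC] [Module C MC] [Module A MC]
  (θ : (K ⊗[B] MB) ≃ₗ[K] (K ⊗[C] MC))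
  {M : Type*} [AddCommGroup M] [Module A M] {πB : M →ₗ[A] MB} {πC : M →ₗ[A] MC}
  (hcompat : ∀ m : M, θ ((1 : K) ⊗ₜ[B] πB m) = (1 : K) ⊗ₜ[C] πC m)
  (hfib : ∀ (x : MB) (y : MC), θ ((1 : K) ⊗ₜ[B] x) = (1 : K) ⊗ₜ[C] y →
    ∃! m : M, πB m = x ∧ πC m = y)

include hfib in
theorem eq_zero_of_πB_eq_zero_of_πC_eq_zero {m : M} (hB : πB m = 0) (hC : πC m = 0) :
    m = 0 :=
  (hfib 0 0 (by simp)).unique ⟨hB, hC⟩ ⟨map_zero _, map_zero _⟩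

include hcompat in
theorem θ_algebraMap_tmul (c : C) (m : M) :
    θ (algebraMap C K c ⊗ₜ[B] πB m) = (1 : K) ⊗ₜ[C] (c • πC m) := by
  rw [tmul_smul, ← algebraMap_smul K, ← hcompat, ← map_smul, smul_tmul', smul_eq_mul, mul_one]

include hsurj hfib in
theorem surjective_πB : Function.Surjective πB := fun x => by
  obtain ⟨y, hy⟩ := TensorProduct.mk_surjective C MC K hsurj (θ (1 ⊗ₜ x))
  obtain ⟨m, hm, -⟩ := hfib x y hy.symm
  exact ⟨m, hm.1⟩

include hsurj hcompat hfib in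
theorem span_range_πC_eq_top : Submodule.span C (Set.range πC) = ⊤ := by
  have hθ (ξ : K ⊗[B] MB) : ∃ y ∈ Submodule.span C (Set.range πC), θ ξ = 1 ⊗ₜ y := by
    induction ξ using TensorProduct.induction_on with
    | zero => exact ⟨0, zero_mem _, by simp⟩
    | tmul k x =>
      obtain ⟨c, rfl⟩ := hsurj k
      obtain ⟨m, rfl⟩ := surjective_πB hsurj θ hfib x
      exact ⟨c • πC m, Submodule.smul_mem _ _ (Submodule.subset_span ⟨m, rfl⟩),
        θ_algebraMap_tmul θ hcompat c m⟩
    | add ξ ξ' h h' =>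
      obtain ⟨y, hy, h⟩ := h
      obtain ⟨y', hy', h'⟩ := h'
      exact ⟨y + y', add_mem hy hy', by rw [map_add, h, h', tmul_add]⟩
  refine eq_top_iff.mpr fun y _ => ?_
  obtain ⟨y', hy', h⟩ := hθ (θ.symm (1 ⊗ₜ y))
  rw [LinearEquiv.apply_symm_apply] at h
  obtain ⟨m, hm, -⟩ := hfib 0 (y - y') (by simp [tmul_sub, h])
  simpa using add_mem hy' (Submodule.subset_span ⟨m, hm.2⟩)

variable [Algebra A B] [Algebra A C] [IsScalarTower A B MB] [IsScalarTower A C MC]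
  (hpull : ∀ (b : B) (c : C), algebraMap B K b = algebraMap C K c →
    ∃! a : A, algebraMap A B a = b ∧ algebraMap A C a = c)

include hpull in
theorem eq_zero_of_algebraMap_eq_zero {a : A} (hB : algebraMap A B a = 0)
    (hC : algebraMap A C a = 0) : a = 0 :=
  (hpull 0 0 (by simp)).unique ⟨hB, hC⟩ ⟨map_zero _, map_zero _⟩

include hsurj hcompat hfib hpull in
theorem isTrivialRelation_of_forall_πB_eq_zero [Module.Flat C MC] {ι : Type*} [Fintype ι]
    {f : ι → A} {d : ι → M} (hd : ∀ i, πB (d i) = 0) (hfd : ∑ i, f i • d i = 0) :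
    Module.IsTrivialRelation f d := by
  obtain ⟨k, a, y, hy, ha, haK⟩ := Module.Flat.exists_trivialization_of_one_tmul_eq_zero (S := K)
    (f := fun i => algebraMap A C (f i)) (x := fun i => πC (d i))
    (by simpa [πC.map_smul_eq_algebraMap_smul (S := C)] using congrArg πC hfd)
    fun i => by rw [← hcompat, hd, tmul_zero, map_zero]
  obtain ⟨n, γ, X, hX, hγf, hγJ⟩ := Module.exists_trivialization_in_range_of_span_eq_top
    (span_range_πC_eq_top hsurj θ hcompat hfib) _ hy ha haK
  choose l hlB hlC using fun i r => (hpull 0 (γ i r) (by simpa using (hγJ i r).symm)).exists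
  refine ⟨n, l, X, fun i => ?_, fun r => ?_⟩
  · rw [← sub_eq_zero]
    apply eq_zero_of_πB_eq_zero_of_πC_eq_zero θ hfib
    · simp [hd, πB.map_smul_eq_algebraMap_smul (S := B), hlB]
    · simp [hX, πC.map_smul_eq_algebraMap_smul (S := C), hlC]
  · apply eq_zero_of_algebraMap_eq_zero hpull
    · simp [hlB]
    · simpa [hlC] using hγf r

include hsurj hcompat hfib hpull in
theorem exists_πB_sub_sum_smul_eq_zero [Module.Flat B MB] [Module.Flat C MC]
    {ι : Type*} [Fintype ι] {f : ι → A} {x : ι → M} (hfx : ∑ i, f i • x i = 0) :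
    ∃ (l : ℕ) (α : ι → Fin l → A) (Y : Fin l → M), (∀ j, ∑ i, f i * α i j = 0) ∧
      ∀ i, πB (x i - ∑ j, α i j • Y j) = 0 := by
  obtain ⟨k, a, w, hw, ha⟩ := Module.Flat.isTrivialRelation_of_sum_smul_eq_zero
    (f := fun i => algebraMap A C (f i)) (x := fun i => πC (x i))
    (by simpa [πC.map_smul_eq_algebraMap_smul (S := C)] using congrArg πC hfx)
  obtain ⟨n, σ, Z, hσx, hσf, -⟩ := Module.exists_trivialization_in_range_of_span_eq_top
    (span_range_πC_eq_top hsurj θ hcompat hfib) ⊤ hw ha fun _ _ => Submodule.mem_top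
  have hxK (i : ι) :
      (1 : K) ⊗ₜ[B] πB (x i) = ∑ r, algebraMap C K (σ i r) ⊗ₜ[B] πB (Z r) := by
    apply θ.injective
    simp only [hcompat, map_sum, hσx, tmul_sum, θ_algebraMap_tmul θ hcompat]
  obtain ⟨l, b, b', y, hy, hb, hbσ⟩ := Module.Flat.exists_trivialization_of_one_tmul_eq_sum
    (f := fun i => algebraMap A B (f i))
    (by simpa [πB.map_smul_eq_algebraMap_smul (S := B)] using congrArg πB hfx) _ _ hxK
  choose c' hc' using fun r j => hsurj (algebraMap B K (b' r j))
  choose α hαB hαC using fun i j =>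
    (hpull (b i j) (∑ r, c' r j * σ i r) (by simp [hbσ, map_sum, hc'])).exists
  choose Y hY using fun j => surjective_πB hsurj θ hfib (y j)
  refine ⟨l, α, Y, fun j => ?_, fun i => ?_⟩
  · apply eq_zero_of_algebraMap_eq_zero hpull
    · simpa [hαB] using hb j
    · simp only [map_sum, map_mul, hαC, Finset.mul_sum]
      rw [Finset.sum_comm]
      simp only [mul_left_comm _ (c' _ j), ← Finset.mul_sum, hσf, mul_zero,
        Finset.sum_const_zero]
  · simp [hy, πB.map_smul_eq_algebraMap_smul (S := B), hαB, hY]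

include hsurj hcompat hfib hpull in
theorem isTrivialRelation_of_sum_smul_eq_zero [Module.Flat B MB] [Module.Flat C MC]
    {ι : Type*} [Fintype ι] {f : ι → A} {x : ι → M} (hfx : ∑ i, f i • x i = 0) :
    Module.IsTrivialRelation f x := by
  obtain ⟨l, α, Y, hαf, hd⟩ := exists_πB_sub_sum_smul_eq_zero hsurj θ hcompat hfib hpull hfx
  have hfd : ∑ i, f i • (x i - ∑ j, α i j • Y j) = 0 := by
    simp only [smul_sub, Finset.sum_sub_distrib, hfx, Finset.smul_sum, smul_smul]
    rw [Finset.sum_comm]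
    simp [← Finset.sum_smul, hαf]
  have hx : x = (fun i => x i - ∑ j, α i j • Y j) + fun i => ∑ j, α i j • Y j := by
    ext i
    simp
  rw [hx]
  exact Module.IsTrivialRelation.add
    (isTrivialRelation_of_forall_πB_eq_zero hsurj θ hcompat hfib hpull hd hfd)
    ⟨l, α, Y, fun _ => rfl, hαf⟩

end MilnorGluing

theorem ferrand_glued_module_flat_general
    (A B C K : Type*) [CommRing A] [CommRing B] [CommRing C] [CommRing K]
    [Algebra A B] [Algebra A C] [Algebra B K] [Algebra C K]
    (hsurj : Function.Surjective (algebraMap C K))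
    (hpull : ∀ (b : B) (c : C), algebraMap B K b = algebraMap C K c →
      ∃! a : A, algebraMap A B a = b ∧ algebraMap A C a = c)
    (MB MC : Type*)
    [AddCommGroup MB] [Module B MB] [Module A MB] [IsScalarTower A B MB]
    [AddCommGroup MC] [Module C MC] [Module A MC] [IsScalarTower A C MC]
    [Module.Flat B MB] [Module.Flat C MC]
    (θ : (K ⊗[B] MB) ≃ₗ[K] (K ⊗[C] MC))
    (M : Type*) [AddCommGroup M] [Module A M]
    (πB : M →ₗ[A] MB) (πC : M →ₗ[A] MC)
    (hcompat : ∀ m : M, θ ((1 : K) ⊗ₜ[B] πB m) = (1 : K) ⊗ₜ[C] πC m)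
    (hfib : ∀ (x : MB) (y : MC), θ ((1 : K) ⊗ₜ[B] x) = (1 : K) ⊗ₜ[C] y →
      ∃! m : M, πB m = x ∧ πC m = y) :
    Module.Flat A M :=
  Module.Flat.of_forall_isTrivialRelation
    (MilnorGluing.isTrivialRelation_of_sum_smul_eq_zero hsurj θ hcompat hfib hpull)

/-- Ferrand's gluing theorem: given flat modules `M_B` over `B` and `M_C` over
`C` together with an isomorphism `θ : K ⊗_B M_B ≅ K ⊗_C M_C` of `K`-modules,
the fiber product `M = M_B ×_{K ⊗_C M_C} M_C` (encoded here by its pullback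
universal property via `πB`, `πC`) is a flat `A`-module. -/
theorem ferrand_glued_module_flat
    (A B C K : Type*) [CommRing A] [CommRing B] [CommRing C] [CommRing K]
    [Algebra A B] [Algebra A C] [Algebra A K] [Algebra B K] [Algebra C K]
    [IsScalarTower A B K] [IsScalarTower A C K]
    (hsurj : Function.Surjective (algebraMap C K))
    (hpull : ∀ (b : B) (c : C), algebraMap B K b = algebraMap C K c →
      ∃! a : A, algebraMap A B a = b ∧ algebraMap A C a = c)
    (MB MC : Type*)
    [AddCommGroup MB] [Module B MB] [Module A MB] [IsScalarTower A B MB]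
    [AddCommGroup MC] [Module C MC] [Module A MC] [IsScalarTower A C MC]
    [Module.Flat B MB] [Module.Flat C MC]
    (θ : (K ⊗[B] MB) ≃ₗ[K] (K ⊗[C] MC))
    (M : Type*) [AddCommGroup M] [Module A M]
    (πB : M →ₗ[A] MB) (πC : M →ₗ[A] MC)
    (hcompat : ∀ m : M, θ ((1 : K) ⊗ₜ[B] πB m) = (1 : K) ⊗ₜ[C] πC m)
    (hfib : ∀ (x : MB) (y : MC), θ ((1 : K) ⊗ₜ[B] x) = (1 : K) ⊗ₜ[C] y →
      ∃! m : M, πB m = x ∧ πC m = y) :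
    Module.Flat A M :=
  ferrand_glued_module_flat_general A B C K hsurj hpull MB MC θ M πB πC hcompat hfib
end

section
/- Let B → K and C → K be ring homomorphisms with C → K surjective and A = B ×_K C with conductor I = Ker(A → B). Then Spec(A) is set-theoretically the disjoint union of the closed set V(I) and the open set Spec(A) \ V(I), and the map Spec(C) → Spec(A) induced by the projection A → C restricts to a bijection (indeed homeomorphism) from Spec(C) \ V(IC) onto Spec(A) \ V(I). -/
/-!
Write `f : A → C` and let `I` be the conductor. Because `A` is a fiber product, `f` is injective
on `I` and `f(I) = IC` is an ideal of `C`. Hence for `t ∈ I` every `c / f(t)ⁿ` equals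
`f(a) / f(t)ⁿ⁺¹` with `f(a) = f(t) c`, and `f(a) = 0` forces `t a = 0` since `t a ∈ I ∩ ker f`:
the localisation `C_{f(t)}` is also the localisation `A_t`. So `Spec C → Spec A` maps `D(f t)` bijectively onto `D(t)`,
and these basic opens cover `Spec C \ V(IC)` and `Spec A \ V(I)` as `t` runs over `I`.
-/

namespace PrimeSpectrum

lemma mem_compl_zeroLocus_iff_exists {R : Type*} [CommSemiring R] {s : Set R}
    {p : PrimeSpectrum R} : p ∈ (zeroLocus s)ᶜ ↔ ∃ t ∈ s, p ∈ basicOpen t := by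
  simp only [Set.mem_compl_iff, mem_zeroLocus, Set.not_subset, SetLike.mem_coe, mem_basicOpen]

variable {A C : Type*} [CommRing A] [CommRing C] [Algebra A C] {I : Ideal A}

theorem isLocalization_away_of_mem_conductor
    (hker : RingHom.ker (algebraMap A C) ⊓ I = ⊥)
    (hrange : (I.map (algebraMap A C) : Set C) ⊆ Set.range (algebraMap A C))
    {t : A} (ht : t ∈ I) (S : Type*) [CommRing S] [Algebra A S] [Algebra C S]
    [IsScalarTower A C S] [IsLocalization.Away (algebraMap A C t) S] :
    IsLocalization.Away t S := by
  have hS : ∀ a, algebraMap A S a = algebraMap C S (algebraMap A C a) :=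
    IsScalarTower.algebraMap_apply A C S
  refine .mk t ?_ (fun s ↦ ?_) (fun a b hab ↦ ?_)
  · rw [hS]
    exact IsLocalization.Away.algebraMap_isUnit _
  · obtain ⟨n, c, hc⟩ := IsLocalization.Away.surj (algebraMap A C t) s
    obtain ⟨a, ha⟩ := hrange (Ideal.mul_mem_right c _ (Ideal.mem_map_of_mem _ ht))
    refine ⟨n + 1, a, ?_⟩
    rw [hS, hS, ha, pow_succ, ← mul_assoc, hc, map_mul, mul_comm]
  · rw [hS, hS] at hab
    obtain ⟨n, hn⟩ := IsLocalization.Away.exists_of_eq (algebraMap A C t) hab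
    have hmem : t * (t ^ n * a - t ^ n * b) ∈ RingHom.ker (algebraMap A C) ⊓ I :=
      ⟨by simp [RingHom.mem_ker, hn], I.mul_mem_right _ ht⟩
    rw [hker, Ideal.mem_bot] at hmem
    exact ⟨n + 1, by linear_combination hmem⟩

theorem comap_bijOn_basicOpen_of_mem_conductor
    (hker : RingHom.ker (algebraMap A C) ⊓ I = ⊥)
    (hrange : (I.map (algebraMap A C) : Set C) ⊆ Set.range (algebraMap A C))
    {t : A} (ht : t ∈ I) :
    Set.BijOn (comap (algebraMap A C)) (basicOpen (algebraMap A C t)) (basicOpen t) := by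
  let S := Localization.Away (algebraMap A C t)
  have := isLocalization_away_of_mem_conductor hker hrange ht S
  have hcomp : comap (algebraMap A S) = comap (algebraMap A C) ∘ comap (algebraMap C S) := by
    rw [IsScalarTower.algebraMap_eq A C S, comap_comp]
  rw [← localization_away_comap_range S (algebraMap A C t), ← localization_away_comap_range S t,
    hcomp, Set.range_comp]
  exact (hcomp ▸ localization_comap_injective S (.powers t)).injOn_range.bijOn_image

theorem comap_bijOn_compl_zeroLocus_of_conductor
    (hker : RingHom.ker (algebraMap A C) ⊓ I = ⊥)
    (hrange : (I.map (algebraMap A C) : Set C) ⊆ Set.range (algebraMap A C)) :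
    Set.BijOn (comap (algebraMap A C)) (zeroLocus (I.map (algebraMap A C) : Set C))ᶜ
      (zeroLocus (I : Set A))ᶜ := by
  have hpre : comap (algebraMap A C) ⁻¹' (zeroLocus (I : Set A))ᶜ =
      (zeroLocus (I.map (algebraMap A C) : Set C))ᶜ := by
    rw [Set.preimage_compl, preimage_comap_zeroLocus, Ideal.map, zeroLocus_span]
  have hmem q : comap (algebraMap A C) q ∈ (zeroLocus (I : Set A))ᶜ ↔ q ∈ _ :=
    Set.ext_iff.mp hpre q
  refine ⟨fun q hq ↦ (hmem q).mpr hq, fun q₁ hq₁ q₂ _ h ↦ ?_, fun p hp ↦ ?_⟩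
  · obtain ⟨t, ht, hq₁t⟩ := mem_compl_zeroLocus_iff_exists.mp ((hmem q₁).mpr hq₁)
    have hq₂t : comap (algebraMap A C) q₂ ∈ basicOpen t := h ▸ hq₁t
    exact (comap_bijOn_basicOpen_of_mem_conductor hker hrange ht).injOn hq₁t hq₂t h
  · obtain ⟨t, ht, hpt⟩ := mem_compl_zeroLocus_iff_exists.mp hp
    obtain ⟨q, -, rfl⟩ := (comap_bijOn_basicOpen_of_mem_conductor hker hrange ht).surjOn hpt
    exact ⟨q, (hmem q).mp (mem_compl_zeroLocus_iff_exists.mpr ⟨t, ht, hpt⟩), rfl⟩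

end PrimeSpectrum

theorem ferrand_spec_decomposition_general
    (A B C K : Type*) [CommRing A] [CommRing B] [CommRing C] [CommRing K]
    [Algebra A B] [Algebra A C] [Algebra A K] [Algebra B K] [Algebra C K]
    [IsScalarTower A B K] [IsScalarTower A C K]
    (hpull : ∀ (b : B) (c : C), algebraMap B K b = algebraMap C K c →
      ∃! a : A, algebraMap A B a = b ∧ algebraMap A C a = c) :
    IsClosed (PrimeSpectrum.zeroLocus
        ((RingHom.ker (algebraMap A B) : Ideal A) : Set A)) ∧
      IsOpen (PrimeSpectrum.zeroLocus
        ((RingHom.ker (algebraMap A B) : Ideal A) : Set A))ᶜ ∧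
      Set.BijOn (PrimeSpectrum.comap (algebraMap A C))
        (PrimeSpectrum.zeroLocus
          ((Ideal.map (algebraMap A C) (RingHom.ker (algebraMap A B)) : Ideal C) : Set C))ᶜ
        (PrimeSpectrum.zeroLocus
          ((RingHom.ker (algebraMap A B) : Ideal A) : Set A))ᶜ := by
  have hker : RingHom.ker (algebraMap A C) ⊓ RingHom.ker (algebraMap A B) = ⊥ := by
    refine eq_bot_iff.mpr fun a ⟨hc, hb⟩ ↦ ?_
    obtain ⟨_, _, huniq⟩ := hpull 0 0 (by simp)
    exact (huniq a ⟨hb, hc⟩).trans (huniq 0 ⟨map_zero _, map_zero _⟩).symm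
  have hmap : (RingHom.ker (algebraMap A B)).map (algebraMap A C) ≤
      RingHom.ker (algebraMap C K) := by
    refine Ideal.map_le_iff_le_comap.mpr fun a (ha : algebraMap A B a = 0) ↦ ?_
    rw [Ideal.mem_comap, RingHom.mem_ker, ← IsScalarTower.algebraMap_apply,
      IsScalarTower.algebraMap_apply A B K, ha, map_zero]
  have hrange : ((RingHom.ker (algebraMap A B)).map (algebraMap A C) : Set C) ⊆
      Set.range (algebraMap A C) := fun c hc ↦ by
    obtain ⟨a, ⟨-, ha⟩, -⟩ := hpull 0 c (by rw [map_zero, (hmap hc : algebraMap C K c = 0)])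
    exact ⟨a, ha⟩
  exact ⟨PrimeSpectrum.isClosed_zeroLocus _, (PrimeSpectrum.isClosed_zeroLocus _).isOpen_compl,
    PrimeSpectrum.comap_bijOn_compl_zeroLocus_of_conductor hker hrange⟩

/-- For a Ferrand fiber product `A = B ×_K C` with conductor `I`:
`Spec A` is the disjoint union of the closed set `V(I)` and the open set
`Spec A \ V(I)`, and `Spec C → Spec A` restricts to a bijection
`Spec C \ V(IC) → Spec A \ V(I)`. -/
theorem ferrand_spec_decomposition
    (A B C K : Type*) [CommRing A] [CommRing B] [CommRing C] [CommRing K]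
    [Algebra A B] [Algebra A C] [Algebra A K] [Algebra B K] [Algebra C K]
    [IsScalarTower A B K] [IsScalarTower A C K]
    (hsurj : Function.Surjective (algebraMap C K))
    (hpull : ∀ (b : B) (c : C), algebraMap B K b = algebraMap C K c →
      ∃! a : A, algebraMap A B a = b ∧ algebraMap A C a = c) :
    IsClosed (PrimeSpectrum.zeroLocus
        ((RingHom.ker (algebraMap A B) : Ideal A) : Set A)) ∧
      IsOpen (PrimeSpectrum.zeroLocus
        ((RingHom.ker (algebraMap A B) : Ideal A) : Set A))ᶜ ∧
      Set.BijOn (PrimeSpectrum.comap (algebraMap A C))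
        (PrimeSpectrum.zeroLocus
          ((Ideal.map (algebraMap A C) (RingHom.ker (algebraMap A B)) : Ideal C) : Set C))ᶜ
        (PrimeSpectrum.zeroLocus
          ((RingHom.ker (algebraMap A B) : Ideal A) : Set A))ᶜ :=
  ferrand_spec_decomposition_general A B C K hpull
end

section
/- Let B → K and C → K be ring homomorphisms with C → K surjective and A = B ×_K C. Then the map Spec(B) ⊔ Spec(C) → Spec(A) induced by the two projections is surjective. -/
/-!
If `p` contains `ker (A → B)`, it comes from `Spec B`, because `A → B` is surjective when
`C → K` is. Otherwise choose `t ∈ ker (A → B)` outside `p`. The fiber product property makes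
`A → C` restrict to an isomorphism `ker (A → B) ≅ ker (C → K)`; hence `t • C` lies in the image
of `A` and `t` kills `ker (A → C)`, so that `A_t → C_t` is an isomorphism and the point `p` of
`D(t) = Spec A_t` comes from `Spec C_t ⊆ Spec C`.
-/

open PrimeSpectrum

section Localization

variable {A C : Type*} [CommRing A] [CommRing C] [Algebra A C]

theorem isLocalization_away_of_dvd_of_mul_eq_zero (S : Type*) [CommRing S] [Algebra A S]
    [Algebra C S] [IsScalarTower A C S] (t : A) [IsLocalization.Away (algebraMap A C t) S]
    (hdvd : ∀ c : C, ∃ a : A, algebraMap A C a = algebraMap A C t * c)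
    (hann : ∀ a : A, algebraMap A C a = 0 → t * a = 0) :
    IsLocalization.Away t S := by
  have hA : ∀ a : A, algebraMap A S a = algebraMap C S (algebraMap A C a) :=
    IsScalarTower.algebraMap_apply A C S
  refine .mk t ?_ (fun s ↦ ?_) (fun a b hab ↦ ?_)
  · rw [hA]
    exact IsLocalization.Away.algebraMap_isUnit _
  · obtain ⟨n, c, hc⟩ := IsLocalization.Away.surj (algebraMap A C t) s
    obtain ⟨a, ha⟩ := hdvd c
    refine ⟨n + 1, a, ?_⟩
    rw [hA, hA, ha, map_mul, ← hc, pow_succ]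
    ring
  · rw [hA, hA] at hab
    obtain ⟨n, hn⟩ := IsLocalization.Away.exists_of_eq (algebraMap A C t) hab
    refine ⟨n + 1, ?_⟩
    have := hann (t ^ n * (a - b)) (by rw [map_mul, map_sub, map_pow, mul_sub, hn, sub_self])
    linear_combination this

theorem basicOpen_subset_range_comap_of_dvd_of_mul_eq_zero (t : A)
    (hdvd : ∀ c : C, ∃ a : A, algebraMap A C a = algebraMap A C t * c)
    (hann : ∀ a : A, algebraMap A C a = 0 → t * a = 0) :
    (basicOpen t : Set (PrimeSpectrum A)) ⊆ Set.range (comap (algebraMap A C)) := by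
  let S := Localization.Away (algebraMap A C t)
  have := isLocalization_away_of_dvd_of_mul_eq_zero S t hdvd hann
  rw [← localization_away_comap_range S t, IsScalarTower.algebraMap_eq A C S, comap_comp]
  exact Set.range_comp_subset_range _ _

end Localization

section FiberProduct

variable {A B C K : Type*} [CommRing A] [CommRing B] [CommRing C] [CommRing K]
  [Algebra A B] [Algebra A C] [Algebra B K] [Algebra C K]

theorem algebraMap_surjective_of_fiberProduct (hsurj : Function.Surjective (algebraMap C K))
    (hpull : ∀ (b : B) (c : C), algebraMap B K b = algebraMap C K c →
      ∃! a : A, algebraMap A B a = b ∧ algebraMap A C a = c) :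
    Function.Surjective (algebraMap A B) := by
  intro b
  obtain ⟨c, hc⟩ := hsurj (algebraMap B K b)
  obtain ⟨a, ⟨ha, -⟩, -⟩ := hpull b c hc.symm
  exact ⟨a, ha⟩

theorem basicOpen_subset_range_comap_of_mem_ker_of_fiberProduct [Algebra A K]
    [IsScalarTower A B K] [IsScalarTower A C K]
    (hpull : ∀ (b : B) (c : C), algebraMap B K b = algebraMap C K c →
      ∃! a : A, algebraMap A B a = b ∧ algebraMap A C a = c)
    {t : A} (ht : t ∈ RingHom.ker (algebraMap A B)) :
    (basicOpen t : Set (PrimeSpectrum A)) ⊆ Set.range (comap (algebraMap A C)) := by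
  rw [RingHom.mem_ker] at ht
  have htK : algebraMap C K (algebraMap A C t) = 0 := by
    rw [← IsScalarTower.algebraMap_apply, IsScalarTower.algebraMap_apply A B K, ht, map_zero]
  refine basicOpen_subset_range_comap_of_dvd_of_mul_eq_zero t (fun c ↦ ?_) (fun a ha ↦ ?_)
  · obtain ⟨a, ⟨-, ha⟩, -⟩ := hpull 0 (algebraMap A C t * c) (by simp [htK])
    exact ⟨a, ha⟩
  · obtain ⟨z, -, hz⟩ := hpull 0 0 (by simp)
    have h0 := hz 0 (by simp)
    have hta := hz (t * a) (by simp [ht, ha])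
    rw [hta, h0]

end FiberProduct

/-- For a Ferrand fiber product `A = B ×_K C`, the map
`Spec B ⊔ Spec C → Spec A` is surjective. -/
theorem ferrand_spec_surjective
    (A B C K : Type*) [CommRing A] [CommRing B] [CommRing C] [CommRing K]
    [Algebra A B] [Algebra A C] [Algebra A K] [Algebra B K] [Algebra C K]
    [IsScalarTower A B K] [IsScalarTower A C K]
    (hsurj : Function.Surjective (algebraMap C K))
    (hpull : ∀ (b : B) (c : C), algebraMap B K b = algebraMap C K c →
      ∃! a : A, algebraMap A B a = b ∧ algebraMap A C a = c) :
    ∀ p : PrimeSpectrum A,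
      (∃ q : PrimeSpectrum B, PrimeSpectrum.comap (algebraMap A B) q = p) ∨
      (∃ q : PrimeSpectrum C, PrimeSpectrum.comap (algebraMap A C) q = p) := by
  intro p
  by_cases hker : RingHom.ker (algebraMap A B) ≤ p.asIdeal
  · left
    rw [← Set.mem_range, range_comap_of_surjective _ _
      (algebraMap_surjective_of_fiberProduct hsurj hpull)]
    exact hker
  · right
    obtain ⟨t, ht, htp⟩ := SetLike.not_le_iff_exists.mp hker
    exact basicOpen_subset_range_comap_of_mem_ker_of_fiberProduct hpull ht htp
end
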